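/- arXiv:1607.07497 — 4 statements merged into one kernel-verified Lean document; each statement's English description precedes it below -/
import Mathlib

section
/- Define, for integers ℓ ≥ 2 and i ≥ 0: F(ℓ,0) = 1, F(ℓ,1) = ℓ + 3, F(ℓ,i) = ℓ^i + 3·F(ℓ,i−1) for i ≥ 2; and S(ℓ,0) = 0, S(ℓ,1) = 6, S(ℓ,i) = min{ℓ·S(ℓ,i−1), (ℓ−1)·S(ℓ,i−1) + 4·F(ℓ,i−1)} for i ≥ 2. Then for every integer ℓ ≥ 4, setting c_ℓ = ℓ/(ℓ−3), for all integers i ≥ 1: F(ℓ,i) ≤ c_ℓ·ℓ^i, S(ℓ,i) ≤ 4·c_ℓ·ℓ^i, and S(ℓ,i) ≤ (4·c_ℓ·i + 2)·ℓ^{i−1}. -/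
/-- The quantity `Fail(ℓ, i)` from the stretch analysis. -/
def Fail (ℓ : ℕ) : ℕ → ℕ
  | 0 => 1
  | 1 => ℓ + 3
  | (i + 2) => ℓ ^ (i + 2) + 3 * Fail ℓ (i + 1)

/-- The quantity `Succ(ℓ, i)` from the stretch analysis. -/
def Succ (ℓ : ℕ) : ℕ → ℕ
  | 0 => 0
  | 1 => 6
  | (i + 2) => min (ℓ * Succ ℓ (i + 1)) ((ℓ - 1) * Succ ℓ (i + 1) + 4 * Fail ℓ (i + 1))

/-!
With `c = ℓ / (ℓ - 3)` one has `c * ℓ = ℓ + 3 * c`, which is exactly what makes `c * ℓ ^ i` a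
supersolution of the recursion `F(i + 1) = ℓ ^ (i + 1) + 3 F(i)`. For `S`, the first branch of the
minimum gives `S(i + 1) ≤ 6 ℓ ^ i`, and the second gives `S(i + 1) ≤ ℓ S(i) + 4 F(i)` for `i ≥ 1`, whose
right-hand side grows the coefficient of `ℓ ^ i` by `4 c` per step.
-/

lemma Fail_succ (ℓ i : ℕ) : Fail ℓ (i + 1) = ℓ ^ (i + 1) + 3 * Fail ℓ i := by
  cases i <;> simp [Fail]

lemma Succ_add_two_le_mul (ℓ i : ℕ) : Succ ℓ (i + 2) ≤ ℓ * Succ ℓ (i + 1) :=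
  min_le_left _ _

lemma Succ_add_two_le_mul_add (ℓ i : ℕ) :
    Succ ℓ (i + 2) ≤ ℓ * Succ ℓ (i + 1) + 4 * Fail ℓ (i + 1) :=
  (min_le_right _ _).trans <| by gcongr; exact Nat.sub_le ℓ 1

lemma Succ_succ_le_six_mul_pow (ℓ i : ℕ) : Succ ℓ (i + 1) ≤ 6 * ℓ ^ i := by
  induction i with
  | zero => simp [Succ]
  | succ i ih =>
    calc Succ ℓ (i + 2) ≤ ℓ * Succ ℓ (i + 1) := Succ_add_two_le_mul ℓ i
      _ ≤ ℓ * (6 * ℓ ^ i) := by gcongr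
      _ = 6 * ℓ ^ (i + 1) := by ring

section

variable {ℓ : ℕ} {c : ℝ}

lemma Fail_le_mul_pow (hc : 1 ≤ c) (hcℓ : ℓ + 3 * c ≤ c * ℓ) (i : ℕ) :
    (Fail ℓ i : ℝ) ≤ c * (ℓ : ℝ) ^ i := by
  induction i with
  | zero => simpa [Fail] using hc
  | succ i ih =>
    calc (Fail ℓ (i + 1) : ℝ) = (ℓ : ℝ) ^ (i + 1) + 3 * Fail ℓ i := by
          rw [Fail_succ]; push_cast; ring
      _ ≤ (ℓ : ℝ) ^ (i + 1) + 3 * (c * (ℓ : ℝ) ^ i) := by gcongr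
      _ = (ℓ + 3 * c) * (ℓ : ℝ) ^ i := by ring
      _ ≤ c * ℓ * (ℓ : ℝ) ^ i := by gcongr
      _ = c * (ℓ : ℝ) ^ (i + 1) := by ring

lemma Succ_succ_le_four_mul_pow (hc : 1 ≤ c) (hℓ : 2 ≤ ℓ) (i : ℕ) :
    (Succ ℓ (i + 1) : ℝ) ≤ 4 * c * (ℓ : ℝ) ^ (i + 1) := by
  have hℓ' : (2 : ℝ) ≤ ℓ := by exact_mod_cast hℓ
  calc (Succ ℓ (i + 1) : ℝ) ≤ 6 * (ℓ : ℝ) ^ i := by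
        exact_mod_cast Succ_succ_le_six_mul_pow ℓ i
    _ ≤ 4 * c * ℓ * (ℓ : ℝ) ^ i := by gcongr; nlinarith
    _ = 4 * c * (ℓ : ℝ) ^ (i + 1) := by ring

lemma Succ_succ_le_linear_mul_pow (hc : 1 ≤ c) (hcℓ : ℓ + 3 * c ≤ c * ℓ) (i : ℕ) :
    (Succ ℓ (i + 1) : ℝ) ≤ (4 * c * (i + 1) + 2) * (ℓ : ℝ) ^ i := by
  induction i with
  | zero => simp only [Succ]; push_cast; linarith
  | succ i ih =>
    calc (Succ ℓ (i + 2) : ℝ) ≤ ℓ * Succ ℓ (i + 1) + 4 * Fail ℓ (i + 1) := by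
          exact_mod_cast Succ_add_two_le_mul_add ℓ i
      _ ≤ ℓ * ((4 * c * (i + 1) + 2) * (ℓ : ℝ) ^ i) + 4 * (c * (ℓ : ℝ) ^ (i + 1)) := by
          gcongr; exact Fail_le_mul_pow hc hcℓ (i + 1)
      _ = (4 * c * ((i + 1 : ℕ) + 1) + 2) * (ℓ : ℝ) ^ (i + 1) := by push_cast; ring

end

theorem stmt_5 :
    ∀ ℓ : ℕ, 4 ≤ ℓ →
      ∀ i : ℕ, 1 ≤ i →
        (Fail ℓ i : ℝ) ≤ (ℓ : ℝ) / ((ℓ : ℝ) - 3) * (ℓ : ℝ) ^ i ∧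
        (Succ ℓ i : ℝ) ≤ 4 * ((ℓ : ℝ) / ((ℓ : ℝ) - 3)) * (ℓ : ℝ) ^ i ∧
        (Succ ℓ i : ℝ) ≤ (4 * ((ℓ : ℝ) / ((ℓ : ℝ) - 3)) * (i : ℝ) + 2) * (ℓ : ℝ) ^ (i - 1) := by
  intro ℓ hℓ i hi
  obtain ⟨j, rfl⟩ := Nat.exists_eq_add_of_le' hi
  have hℓ' : (4 : ℝ) ≤ ℓ := by exact_mod_cast hℓ
  have hpos : (0 : ℝ) < ℓ - 3 := by linarith
  have hc : 1 ≤ (ℓ : ℝ) / (ℓ - 3) := (one_le_div hpos).2 (by linarith)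
  have hcℓ : ℓ + 3 * ((ℓ : ℝ) / (ℓ - 3)) ≤ (ℓ : ℝ) / (ℓ - 3) * ℓ := by
    linear_combination -div_mul_cancel₀ (ℓ : ℝ) hpos.ne'
  refine ⟨Fail_le_mul_pow hc hcℓ _, Succ_succ_le_four_mul_pow hc (by omega) j, ?_⟩
  simpa using Succ_succ_le_linear_mul_pow hc hcℓ j
end

section
/- For all integers γ ≥ 1 and i with 1 ≤ i ≤ γ and every real c > 0 there exist c' > 0 and n₀ such that: if n ≥ n₀ and there exists a graph on n vertices with girth at least 2γ + 2 in which every vertex has degree at least c·n^{1/γ}, then there exists a graph H = (V,E) on n vertices with girth at least 2γ + 2 and |E| ≥ c'·n^{1 + 1/γ}, together with disjoint vertex subsets S, T ⊆ V with |S| ≥ c'·n^{i/γ} and |T| ≥ c'·n^{(γ + 1 − i)/γ}, such that every edge e ∈ E is required by some pair (s,t) ∈ S × T with dist_H(s,t) = γ. -/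
open SimpleGraph

/-- In a graph `G`, the pair `(s, t)` requires the edge `e` if every shortest
walk from `s` to `t` includes `e`. -/
def Requires {V : Type*} (G : SimpleGraph V) (s t : V) (e : Sym2 V) : Prop :=
  ∀ p : G.Walk s t, p.length = G.dist s t → e ∈ p.edges

set_option linter.unusedSectionVars false
set_option linter.unusedVariables false

section Aux

open Finset

variable {V : Type*} {G : SimpleGraph V} {γ : ℕ}

lemma edge_head_eq_snd {b c u y : V} (h : G.Adj b y) (w : G.Walk y c)
    (hp : (Walk.cons h w).IsPath) (he : s(u, b) ∈ (Walk.cons h w).edges) : u = y := by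
  rw [Walk.edges_cons, List.mem_cons] at he
  rcases he with he | he
  · rw [Sym2.eq_iff] at he
    rcases he with ⟨h1, h2⟩ | ⟨h1, h2⟩
    · exact absurd (h2 ▸ h) G.irrefl
    · exact h1
  · exfalso
    have hb : b ∈ w.support := Walk.snd_mem_support_of_mem_edges w he
    rw [Walk.cons_isPath_iff] at hp
    exact hp.2 hb

lemma twoPathsCycle : ∀ (N : ℕ) {s t : V} (p q : G.Walk s t),
    p.length + q.length ≤ N → p.IsPath → q.IsPath → p ≠ q →
    ∃ (w : V) (c : G.Walk w w), c.IsCycle ∧ c.length ≤ p.length + q.length := by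
  intro N
  induction N with
  | zero =>
    intro s t p q hlen hp hq hne
    have hp0 : p.length = 0 := by omega
    have hs : s = t := Walk.eq_of_length_eq_zero hp0
    subst hs
    rw [Walk.isPath_iff_eq_nil] at hp hq
    exact absurd (hp.trans hq.symm) hne
  | succ n IH =>
    intro s t p q hlen hp hq hne
    classical
    by_cases hst : s = t
    · subst hst
      rw [Walk.isPath_iff_eq_nil] at hp hq
      exact absurd (hp.trans hq.symm) hne
    by_cases hshare : ∃ z, (z ∈ p.support ∧ z ∈ q.support) ∧ z ≠ s ∧ z ≠ t
    · obtain ⟨z, ⟨hzp, hzq⟩, hzs, hzt⟩ := hshare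
      have hspec₁ := p.take_spec hzp
      have hspec₂ := q.take_spec hzq
      have hl₁ : (p.takeUntil z hzp).length + (p.dropUntil z hzp).length = p.length := by
        rw [← Walk.length_append, hspec₁]
      have hl₂ : (q.takeUntil z hzq).length + (q.dropUntil z hzq).length = q.length := by
        rw [← Walk.length_append, hspec₂]
      have ht₁ : (p.takeUntil z hzp).length ≠ 0 := fun h0 =>
        hzs (Walk.eq_of_length_eq_zero h0).symm
      have ht₂ : (q.takeUntil z hzq).length ≠ 0 := fun h0 =>
        hzs (Walk.eq_of_length_eq_zero h0).symm
      have hd₁ : (p.dropUntil z hzp).length ≠ 0 := fun h0 =>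
        hzt (Walk.eq_of_length_eq_zero h0)
      have hd₂ : (q.dropUntil z hzq).length ≠ 0 := fun h0 =>
        hzt (Walk.eq_of_length_eq_zero h0)
      by_cases hTT : p.takeUntil z hzp = q.takeUntil z hzq
      · have hDD : p.dropUntil z hzp ≠ q.dropUntil z hzq := by
          intro hEq
          apply hne
          rw [← hspec₁, ← hspec₂, hTT, hEq]
        obtain ⟨w, c, hc, hcl⟩ := IH (p.dropUntil z hzp) (q.dropUntil z hzq)
          (by omega) (hp.dropUntil hzp) (hq.dropUntil hzq) hDD
        exact ⟨w, c, hc, by omega⟩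
      · obtain ⟨w, c, hc, hcl⟩ := IH (p.takeUntil z hzp) (q.takeUntil z hzq)
          (by omega) (hp.takeUntil hzp) (hq.takeUntil hzq) hTT
        exact ⟨w, c, hc, by omega⟩
    · push_neg at hshare
      obtain ⟨x, hsx, p', rfl⟩ := Walk.exists_eq_cons_of_ne hst p
      obtain ⟨y, hsy, q', rfl⟩ := Walk.exists_eq_cons_of_ne hst q
      rw [Walk.cons_isPath_iff] at hp hq
      have hxy : x ≠ y := by
        intro hEq
        subst hEq
        have hxt : x = t := hshare x ⟨by simp, by simp⟩ hsx.ne'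
        subst hxt
        have hp'nil : p' = Walk.nil := Walk.isPath_iff_eq_nil.mp hp.1
        have hq'nil : q' = Walk.nil := Walk.isPath_iff_eq_nil.mp hq.1
        apply hne
        rw [hp'nil, hq'nil]
      set q₀ := Walk.cons hsy q' with hq₀
      set qr := q₀.reverse with hqrdef
      have hq₀p : q₀.IsPath := by rw [Walk.cons_isPath_iff]; exact hq
      have hqrp : qr.IsPath := hq₀p.reverse
      have hp'' : (p'.append qr).IsPath := by
        rw [Walk.isPath_def, Walk.support_append, List.nodup_append]
        refine ⟨(Walk.isPath_def _).mp hp.1,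
          (List.tail_sublist _).nodup ((Walk.isPath_def _).mp hqrp), ?_⟩
        rintro a hap _ haq rfl
        have haqr : a ∈ qr.support := (List.tail_sublist _).mem haq
        have haq₀ : a ∈ q₀.support := by
          rw [hqrdef, Walk.support_reverse, List.mem_reverse] at haqr
          exact haqr
        have has : a ≠ s := fun h => hp.2 (h ▸ hap)
        have hat : a = t := hshare a ⟨by simp [hap], haq₀⟩ has
        have htnot : t ∉ qr.support.tail := by
          have := (Walk.isPath_def _).mp hqrp
          rw [Walk.support_eq_cons qr] at this
          exact (List.nodup_cons.mp this).1
        exact htnot (hat ▸ haq)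
      have hno : s(s, x) ∉ (p'.append qr).edges := by
        intro hmem
        have hrev : s(x, s) ∈ (p'.append qr).reverse.edges := by
          rw [Walk.edges_reverse, List.mem_reverse, Sym2.eq_swap]
          exact hmem
        have heq : (p'.append qr).reverse = Walk.cons hsy (q'.append p'.reverse) := by
          rw [Walk.reverse_append, hqrdef, Walk.reverse_reverse, hq₀, Walk.cons_append]
        rw [heq] at hrev
        have hrp : (Walk.cons hsy (q'.append p'.reverse)).IsPath := heq ▸ hp''.reverse
        exact hxy (edge_head_eq_snd hsy _ hrp hrev)
      refine ⟨s, Walk.cons hsx ((⟨p'.append qr, hp''⟩ : G.Path x s) : G.Walk x s),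
        SimpleGraph.Path.cons_isCycle _ hsx hno, ?_⟩
      simp only [Walk.length_cons, Walk.length_append, hqrdef, Walk.length_reverse, hq₀]
      omega

lemma keyUnique (hg : ((2 * γ + 2 : ℕ) : ℕ∞) ≤ G.egirth) {s t : V} (p q : G.Walk s t)
    (hp : p.IsPath) (hq : q.IsPath) (hlen : p.length + q.length ≤ 2 * γ + 1) : p = q := by
  by_contra hne
  obtain ⟨w, c, hc, hcl⟩ := twoPathsCycle (2 * γ + 1) p q hlen hp hq hne
  have h2 := le_egirth.mp hg w c hc
  rw [Nat.cast_le] at h2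
  omega

lemma dist_triangle3 {u a t : V} (h1 : G.Reachable u a) (h2 : G.Reachable a t) :
    G.dist u t ≤ G.dist u a + G.dist a t := by
  obtain ⟨p, hp⟩ := h1.exists_walk_length_eq_dist
  obtain ⟨q, hq⟩ := h2.exists_walk_length_eq_dist
  calc G.dist u t ≤ (p.append q).length := dist_le _
    _ = _ := by rw [Walk.length_append, hp, hq]

lemma dist_le_add_one {u w v : V} (h : G.Adj u w) (hr : G.Reachable v u) :
    G.dist v w ≤ G.dist v u + 1 := by
  have := dist_triangle3 hr h.reachable
  rwa [dist_eq_one_iff_adj.mpr h] at this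

/-- key fact about supports of shortest walks -/
lemma mem_support_shortest {a v z : V} (p : G.Walk a v) (hlen : p.length = G.dist a v)
    (hz : z ∈ p.support) [DecidableEq V] :
    (p.takeUntil z hz).length + G.dist z v ≤ p.length := by
  have hspec := p.take_spec hz
  have hl : (p.takeUntil z hz).length + (p.dropUntil z hz).length = p.length := by
    rw [← Walk.length_append, hspec]
  have := dist_le (p.dropUntil z hz)
  omega

section BFS
variable [DecidableEq V] (v : V)

lemma exists_parent {u : V} {m : ℕ} (hu : G.dist v u = m + 1) :
    ∃ w, G.Adj u w ∧ G.dist v w = m := by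
  have hr : G.Reachable v u := Reachable.of_dist_ne_zero (by omega)
  have hne : u ≠ v := by rintro rfl; rw [dist_self] at hu; omega
  obtain ⟨p, hp, hlen⟩ := hr.exists_path_of_dist
  obtain ⟨w, huw, q, hq⟩ := Walk.exists_eq_cons_of_ne hne p.reverse
  have hql : q.length = m := by
    have hql' : p.reverse.length = m + 1 := by rw [Walk.length_reverse, hlen, hu]
    rw [hq] at hql'; simpa using hql'
  have h1 : G.dist v w ≤ m := by
    have := dist_le q.reverse
    rwa [Walk.length_reverse, hql] at this
  have h2 : G.dist v u ≤ G.dist v w + 1 :=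
    dist_le_add_one huw.symm q.reverse.reachable
  exact ⟨w, huw, by omega⟩

lemma not_mem_shortest_of_lt {u z : V} (p : G.Walk u v) (hlen : p.length = G.dist u v)
    (hgt : p.length < G.dist z v) : z ∉ p.support := fun hz => by
  have := mem_support_shortest p hlen hz; omega

lemma not_mem_shortest_of_ne {u z : V} (p : G.Walk u v) (hlen : p.length = G.dist u v)
    (hzd : G.dist z v = p.length) (hne : z ≠ u) : z ∉ p.support := fun hz => by
  have h1 := mem_support_shortest p hlen hz
  have h0 : (p.takeUntil z hz).length = 0 := by omega
  exact hne (Walk.eq_of_length_eq_zero h0).symm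

lemma not_adj_same (hg : ((2 * γ + 2 : ℕ) : ℕ∞) ≤ G.egirth) {m : ℕ} (hm1 : 1 ≤ m)
    (hmγ : m ≤ γ) {u u' : V} (hu : G.dist v u = m) (hu' : G.dist v u' = m) :
    ¬ G.Adj u u' := by
  intro hadj
  have hru : G.Reachable v u := Reachable.of_dist_ne_zero (by omega)
  have hru' : G.Reachable v u' := Reachable.of_dist_ne_zero (by omega)
  obtain ⟨P, hPp, hPl⟩ := hru.symm.exists_path_of_dist
  obtain ⟨P', hP'p, hP'l⟩ := hru'.symm.exists_path_of_dist
  have hPm : P.length = m := by rw [hPl, dist_comm]; exact hu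
  have hP'm : P'.length = m := by rw [hP'l, dist_comm]; exact hu'
  have hnm : u ∉ P'.support := by
    refine not_mem_shortest_of_ne v P' hP'l ?_ hadj.ne
    rw [hP'm, dist_comm]; exact hu
  have hRp : (Walk.cons hadj P').IsPath := hP'p.cons hnm
  have heq := keyUnique hg P (Walk.cons hadj P') hPp hRp (by
    rw [Walk.length_cons]; omega)
  have hll := congrArg Walk.length heq
  rw [Walk.length_cons] at hll
  omega

lemma parent_unique (hg : ((2 * γ + 2 : ℕ) : ℕ∞) ≤ G.egirth) {k : ℕ} (hk : k + 1 ≤ γ)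
    {u w w' : V} (hu : G.dist v u = k + 1) (h : G.Adj u w) (h' : G.Adj u w')
    (hw : G.dist v w = k) (hw' : G.dist v w' = k) : w = w' := by
  by_contra hne
  have hru : G.Reachable v u := Reachable.of_dist_ne_zero (by omega)
  have hrw : G.Reachable v w := hru.trans h.reachable
  have hrw' : G.Reachable v w' := hru.trans h'.reachable
  obtain ⟨P, hPp, hPl⟩ := hrw.symm.exists_path_of_dist
  obtain ⟨P', hP'p, hP'l⟩ := hrw'.symm.exists_path_of_dist
  have hPm : P.length = k := by rw [hPl, dist_comm]; exact hw
  have hP'm : P'.length = k := by rw [hP'l, dist_comm]; exact hw'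
  have hnm : u ∉ P.support := not_mem_shortest_of_lt v P hPl (by
    rw [hPm, dist_comm, hu]; omega)
  have hnm' : u ∉ P'.support := not_mem_shortest_of_lt v P' hP'l (by
    rw [hP'm, dist_comm, hu]; omega)
  have heq := keyUnique hg (Walk.cons h P) (Walk.cons h' P') (hPp.cons hnm)
    (hP'p.cons hnm') (by simp only [Walk.length_cons]; omega)
  have hsup := congrArg Walk.support heq
  rw [Walk.support_cons, Walk.support_cons, Walk.support_eq_cons P,
    Walk.support_eq_cons P'] at hsup
  simp only [List.cons.injEq] at hsup
  exact hne hsup.2.1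

lemma adj_dist_bounds {u w : V} (h : G.Adj u w) (hr : G.Reachable v u) :
    G.dist v w ≤ G.dist v u + 1 ∧ G.dist v u ≤ G.dist v w + 1 :=
  ⟨dist_le_add_one h hr, dist_le_add_one h.symm (hr.trans h.reachable)⟩

def levG (G : SimpleGraph V) (v : V) (γ : ℕ) : SimpleGraph V where
  Adj x y := G.Adj x y ∧
    ((G.dist v x + 1 = G.dist v y ∧ 1 ≤ G.dist v x ∧ G.dist v y ≤ γ + 1) ∨
     (G.dist v y + 1 = G.dist v x ∧ 1 ≤ G.dist v y ∧ G.dist v x ≤ γ + 1))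
  symm := ⟨fun x y => by rintro ⟨h, ho⟩; exact ⟨h.symm, ho.symm⟩⟩
  loopless := ⟨fun x => by rintro ⟨h, -⟩; exact G.irrefl h⟩

lemma levG_le (v : V) : levG G v γ ≤ G := fun _ _ h => h.1

lemma descWalk (v : V)
    (hchild : ∀ x : V, 1 ≤ G.dist v x → G.dist v x ≤ γ →
      ∃ w, G.Adj x w ∧ G.dist v w = G.dist v x + 1) :
    ∀ (k : ℕ) (x : V), 1 ≤ G.dist v x → G.dist v x + k = γ + 1 →
    ∃ (t : V) (D : (levG G v γ).Walk x t), G.dist v t = γ + 1 ∧ D.length = k ∧ D.IsPath ∧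
      ∀ z ∈ D.support, G.dist v x ≤ G.dist v z := by
  intro k
  induction k with
  | zero =>
    intro x h1 h2
    exact ⟨x, Walk.nil, by omega, rfl, Walk.IsPath.nil, by simp⟩
  | succ n IH =>
    intro x h1 h2
    obtain ⟨w, hxw, hw⟩ := hchild x h1 (by omega)
    obtain ⟨t, D', ht, hl, hp, hs⟩ := IH w (by omega) (by omega)
    have hadj : (levG G v γ).Adj x w := ⟨hxw, Or.inl ⟨hw.symm, by omega, by omega⟩⟩
    refine ⟨t, Walk.cons hadj D', ht, by rw [Walk.length_cons, hl], hp.cons ?_, ?_⟩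
    · intro hmem; have := hs x hmem; omega
    · intro z hz
      rw [Walk.support_cons, List.mem_cons] at hz
      rcases hz with rfl | hz
      · omega
      · have := hs z hz; omega

lemma ancWalk (v : V) :
    ∀ (k : ℕ) (x : V), G.dist v x = k + 1 → k + 1 ≤ γ + 1 →
    ∃ (a : V) (A : (levG G v γ).Walk x a), G.dist v a = 1 ∧ A.length = k ∧ A.IsPath ∧
      ∀ z ∈ A.support, G.dist v z ≤ G.dist v x := by
  intro k
  induction k with
  | zero =>
    intro x h1 _
    exact ⟨x, Walk.nil, h1, rfl, Walk.IsPath.nil, by simp⟩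
  | succ n IH =>
    intro x h1 h2
    obtain ⟨w, hxw, hw⟩ := exists_parent v h1
    obtain ⟨a, A', ha, hl, hp, hs⟩ := IH w hw (by omega)
    have hadj : (levG G v γ).Adj x w := ⟨hxw, Or.inr ⟨by omega, by omega, by omega⟩⟩
    refine ⟨a, Walk.cons hadj A', ha, by rw [Walk.length_cons, hl], hp.cons ?_, ?_⟩
    · intro hmem; have := hs x hmem; omega
    · intro z hz
      rw [Walk.support_cons, List.mem_cons] at hz
      rcases hz with rfl | hz
      · omega
      · have := hs z hz; omega

def trG {v : V} {x y : V} (p : (levG G v γ).Walk x y) : G.Walk x y :=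
  p.transfer G (fun e he => (edgeSet_mono (levG_le v)) (p.edges_subset_edgeSet he))

lemma cover (hg : ((2 * γ + 2 : ℕ) : ℕ∞) ≤ G.egirth) (v : V)
    (hchild : ∀ x : V, 1 ≤ G.dist v x → G.dist v x ≤ γ →
      ∃ w, G.Adj x w ∧ G.dist v w = G.dist v x + 1)
    {x y : V} (hxy : (levG G v γ).Adj x y) (hf : G.dist v x + 1 = G.dist v y) :
    ∃ a t : V, G.dist v a = 1 ∧ G.dist v t = γ + 1 ∧ (levG G v γ).dist a t = γ ∧
      Requires (levG G v γ) a t s(x, y) := by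
  classical
  have hb : 1 ≤ G.dist v x ∧ G.dist v y ≤ γ + 1 := by
    rcases hxy.2 with ⟨e1, e2, e3⟩ | ⟨e1, e2, e3⟩ <;> constructor <;> omega
  set j := G.dist v x with hjdef
  have hj1 : 1 ≤ j := hb.1
  have hyj : G.dist v y = j + 1 := by omega
  have hjγ : j ≤ γ := by omega
  obtain ⟨a, A, ha, hAl, hAp, hAs⟩ := ancWalk (G := G) (γ := γ) v (j - 1) x (by omega) (by omega)
  obtain ⟨t, D, ht, hDl, hDp, hDs⟩ := descWalk v hchild (γ - j) y (by omega) (by omega)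
  set Q : (levG G v γ).Walk a t := A.reverse.append (Walk.cons hxy D) with hQdef
  have hQl : Q.length = γ := by
    rw [hQdef, Walk.length_append, Walk.length_reverse, Walk.length_cons]
    omega
  have hxD : x ∉ D.support := by
    intro hmem; have := hDs x hmem; omega
  have hQp : Q.IsPath := by
    rw [hQdef, Walk.isPath_def, Walk.support_append, Walk.support_cons, List.tail_cons,
      List.nodup_append]
    refine ⟨(Walk.isPath_def _).mp hAp.reverse, (Walk.isPath_def _).mp hDp, ?_⟩
    rintro z hz1 _ hz2 rfl
    have h1 : z ∈ A.support := by
      rw [Walk.support_reverse, List.mem_reverse] at hz1; exact hz1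
    have := hAs z h1
    have := hDs z hz2
    omega
  have hmemQ : s(x, y) ∈ Q.edges := by
    rw [hQdef, Walk.edges_append, Walk.edges_cons]
    simp
  set QG : G.Walk a t := trG Q with hQGdef
  have hQGl : QG.length = γ := by rw [hQGdef, trG, Walk.length_transfer]; exact hQl
  have hQGe : s(x, y) ∈ QG.edges := by rw [hQGdef, trG, Walk.edges_transfer]; exact hmemQ
  have hQGp : QG.IsPath := hQp.transfer _
  have hra : G.Reachable v a := Reachable.of_dist_ne_zero (by omega)
  have hdG : G.dist a t = γ := by
    have hle : G.dist a t ≤ γ := hQGl ▸ dist_le QG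
    have hge : G.dist v t ≤ G.dist v a + G.dist a t := dist_triangle3 hra QG.reachable
    omega
  have hdH : (levG G v γ).dist a t = γ := by
    have hle : (levG G v γ).dist a t ≤ γ := by
      have h := dist_le Q; rw [hQl] at h; exact h
    obtain ⟨R, hRl⟩ := Reachable.exists_walk_length_eq_dist ⟨Q⟩
    have : G.dist a t ≤ R.length := by
      have := dist_le (trG R)
      rwa [trG, Walk.length_transfer] at this
    omega
  refine ⟨a, t, ha, ht, hdH, ?_⟩
  intro p hp
  rw [hdH] at hp
  set pG : G.Walk a t := trG p with hpGdef
  have hpGl : pG.length = γ := by rw [hpGdef, trG, Walk.length_transfer]; exact hp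
  have hBl : pG.bypass.length = γ := by
    have h1 := Walk.length_bypass_le pG
    have h2 : G.dist a t ≤ pG.bypass.length := dist_le _
    omega
  have hBQ : pG.bypass = QG := keyUnique hg pG.bypass QG (Walk.bypass_isPath pG) hQGp
    (by omega)
  have : s(x, y) ∈ pG.edges := Walk.edges_bypass_subset pG (hBQ ▸ hQGe)
  rwa [hpGdef, trG, Walk.edges_transfer] at this

theorem main_structure [Fintype V] (hγ : 1 ≤ γ)
    (hg : ((2 * γ + 2 : ℕ) : ℕ∞) ≤ G.egirth) (d : ℕ) (hd2 : 2 ≤ d)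
    (hdeg : ∀ x : V, d ≤ (G.neighborSet x).ncard) (v : V) :
    ∃ (H : SimpleGraph V) (S T : Finset V),
      ((2 * γ + 2 : ℕ) : ℕ∞) ≤ H.egirth ∧
      d * (d - 1) ^ γ ≤ H.edgeSet.ncard ∧
      Disjoint S T ∧
      d * (d - 1) ^ (γ - 1) ≤ S.card ∧
      (d - 1) ^ γ ≤ T.card ∧
      ∀ e ∈ H.edgeSet, ∃ s ∈ S, ∃ t ∈ T, H.dist s t = γ ∧ Requires H s t e := by
  classical
  set f : V → ℕ := G.dist v with hfdef
  set L : ℕ → Finset V := fun m => univ.filter (fun u => f u = m) with hLdef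
  set childF : V → Finset V := fun u => univ.filter (fun w => G.Adj u w ∧ f w = f u + 1)
    with hchildFdef
  have hdeg' : ∀ x : V, d ≤ (G.neighborFinset x).card := by
    intro x
    have := hdeg x
    rwa [Set.ncard_eq_toFinset_card', ← neighborFinset_def] at this
  -- children cardinality
  have hchild_card : ∀ u : V, 1 ≤ f u → f u ≤ γ → d - 1 ≤ (childF u).card := by
    intro u h1 h2
    have hru : G.Reachable v u := Reachable.of_dist_ne_zero (show f u ≠ 0 by omega)
    set A := (G.neighborFinset u).filter (fun w => f w = f u - 1) with hA
    set C := (G.neighborFinset u).filter (fun w => f w = f u + 1) with hC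
    have hsub : G.neighborFinset u ⊆ A ∪ C := by
      intro w hw
      rw [mem_neighborFinset] at hw
      have b1 : f w ≤ f u + 1 := dist_le_add_one hw hru
      have b2 : f u ≤ f w + 1 := dist_le_add_one hw.symm (hru.trans hw.reachable)
      have hne : f w ≠ f u := by
        intro hEq
        exact not_adj_same v hg h1 h2 (show G.dist v u = f u from rfl)
          (show G.dist v w = f u from hEq) hw
      rw [mem_union, hA, hC, mem_filter, mem_filter, mem_neighborFinset]
      rcases Nat.lt_or_ge (f w) (f u) with hlt | hge
      · exact Or.inl ⟨hw, by omega⟩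
      · exact Or.inr ⟨hw, by omega⟩
    have hAcard : A.card ≤ 1 := by
      rw [card_le_one]
      intro w hw w' hw'
      rw [hA, mem_filter, mem_neighborFinset] at hw hw'
      exact parent_unique v hg (show (f u - 1) + 1 ≤ γ by omega)
        (show f u = (f u - 1) + 1 by omega) hw.1 hw'.1
        (show f w = f u - 1 from hw.2) (show f w' = f u - 1 from hw'.2)
    have hCsub : C ⊆ childF u := by
      intro w hw
      rw [hC, mem_filter, mem_neighborFinset] at hw
      rw [hchildFdef, mem_filter]
      exact ⟨mem_univ _, hw.1, hw.2⟩
    calc d - 1 ≤ (G.neighborFinset u).card - A.card := by have := hdeg' u; omega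
      _ ≤ (A ∪ C).card - A.card := by
          have := card_le_card hsub; omega
      _ ≤ C.card := by
          have := card_union_le A C; omega
      _ ≤ (childF u).card := card_le_card hCsub
  have hchild : ∀ x : V, 1 ≤ f x → f x ≤ γ →
      ∃ w, G.Adj x w ∧ f w = f x + 1 := by
    intro x h1 h2
    have := hchild_card x h1 h2
    have hne : (childF x).Nonempty := card_pos.mp (by omega)
    obtain ⟨w, hw⟩ := hne
    rw [hchildFdef, mem_filter] at hw
    exact ⟨w, hw.2⟩
  -- pairs
  set pairs : ℕ → Finset (V × V) := fun m =>
    (L m).biUnion (fun u => (childF u).image (fun w => (u, w))) with hpairsdef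
  have hpairs_mem : ∀ m (p : V × V), p ∈ pairs m ↔
      (f p.1 = m ∧ G.Adj p.1 p.2 ∧ f p.2 = m + 1) := by
    intro m p
    rw [hpairsdef]
    simp only [mem_biUnion, mem_image, hLdef, mem_filter, mem_univ, true_and, hchildFdef]
    constructor
    · rintro ⟨u, hu, w, hw, rfl⟩
      exact ⟨hu, hw.1, by rw [hu] at hw; exact hw.2⟩
    · rintro ⟨h1, h2, h3⟩
      exact ⟨p.1, h1, p.2, ⟨h2, by omega⟩, rfl⟩
  have hpairs_lower : ∀ m, 1 ≤ m → m ≤ γ → (L m).card * (d - 1) ≤ (pairs m).card := by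
    intro m h1 h2
    rw [hpairsdef]
    rw [card_biUnion]
    · calc (L m).card * (d - 1) = (L m).card • (d - 1) := by rw [smul_eq_mul]
        _ ≤ ∑ u ∈ L m, ((childF u).image (fun w => (u, w))).card := by
            apply Finset.card_nsmul_le_sum
            intro u hu
            rw [hLdef, mem_filter] at hu
            rw [Finset.card_image_of_injective _ (fun a b h => by
              simpa using congrArg Prod.snd h)]
            exact hchild_card u (by omega) (by omega)
    · intro u hu u' hu' hne
      apply Finset.disjoint_left.mpr
      intro p hp hp'
      rw [mem_image] at hp hp'
      obtain ⟨w, _, rfl⟩ := hp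
      obtain ⟨w', _, h2⟩ := hp'
      exact hne (congrArg Prod.fst h2).symm
  have hLgrow : ∀ m, 1 ≤ m → m ≤ γ → (L 1).card * (d - 1) ^ (m - 1) ≤ (L m).card := by
    intro m
    induction m with
    | zero => omega
    | succ k IH =>
      intro _ hk
      rcases Nat.eq_or_lt_of_le (show 1 ≤ k + 1 by omega) with h1 | h1
      · simp [← h1]
      · have hk1 : 1 ≤ k := by omega
        have hkγ : k ≤ γ := by omega
        have step : (pairs k).card ≤ (L (k + 1)).card := by
          apply Finset.card_le_card_of_injOn Prod.snd
          · intro p hp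
            rw [Finset.mem_coe, hpairs_mem] at hp
            rw [Finset.mem_coe, hLdef, mem_filter]
            exact ⟨mem_univ _, hp.2.2⟩
          · intro p hp q hq hEq
            rw [Finset.mem_coe, hpairs_mem] at hp hq
            have h1 : p.1 = q.1 := by
              refine parent_unique v hg (show k + 1 ≤ γ by omega)
                (u := p.2) (show G.dist v p.2 = k + 1 from hp.2.2) hp.2.1.symm
                (hEq.symm ▸ hq.2.1.symm) (show G.dist v p.1 = k from hp.1)
                (show G.dist v q.1 = k from hq.1)
            exact Prod.ext h1 hEq
        calc (L 1).card * (d - 1) ^ k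
            = ((L 1).card * (d - 1) ^ (k - 1)) * (d - 1) := by
              rw [mul_assoc, ← pow_succ]
              congr 2
              omega
          _ ≤ (L k).card * (d - 1) := by
              exact Nat.mul_le_mul_right _ (IH hk1 hkγ)
          _ ≤ (pairs k).card := hpairs_lower k hk1 hkγ
          _ ≤ (L (k + 1)).card := step
  have hL1 : L 1 = G.neighborFinset v := by
    ext w
    rw [hLdef, mem_filter, mem_neighborFinset]
    simp only [mem_univ, true_and]
    exact dist_eq_one_iff_adj
  have hL1d : d ≤ (L 1).card := by rw [hL1]; exact hdeg' v
  set T := L (γ + 1) with hTdef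
  set S := univ.filter (fun u => f u ≤ γ) with hSdef
  have hanc : ∀ u : V, f u = γ → ∃ (a : V) (A : (levG G v γ).Walk u a),
      G.dist v a = 1 ∧ A.length = γ - 1 ∧ A.IsPath ∧
      ∀ z ∈ A.support, G.dist v z ≤ G.dist v u := by
    intro u hu
    exact ancWalk (G := G) v (γ - 1) u (show f u = (γ - 1) + 1 by omega) (by omega)
  choose ancV ancW hanc1 hanc2 hanc3 hanc4 using hanc
  have hancInj : ∀ (t u u' : V), f t = γ + 1 → G.Adj u t → G.Adj u' t →
      ∀ (hu : f u = γ) (hu' : f u' = γ), ancV u hu = ancV u' hu' → u = u' := by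
    intro t u u' ht hut hu't hu hu' hEq
    set R : G.Walk t (ancV u hu) := Walk.cons hut.symm (trG (ancW u hu)) with hRdef
    set R' : G.Walk t (ancV u hu) :=
      (Walk.cons hu't.symm (trG (ancW u' hu'))).copy rfl hEq.symm with hR'def
    have hnm : t ∉ (trG (ancW u hu)).support := by
      rw [trG, Walk.support_transfer]
      intro hmem
      have h4 : f t ≤ f u := hanc4 u hu t hmem
      omega
    have hnm' : t ∉ (trG (ancW u' hu')).support := by
      rw [trG, Walk.support_transfer]
      intro hmem
      have h4 : f t ≤ f u' := hanc4 u' hu' t hmem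
      omega
    have hRp : R.IsPath := ((hanc3 u hu).transfer _).cons hnm
    have hR'p : R'.IsPath := by
      rw [hR'def, Walk.isPath_copy]
      exact ((hanc3 u' hu').transfer _).cons hnm'
    have hRl : R.length = γ := by
      rw [hRdef, Walk.length_cons, trG, Walk.length_transfer, hanc2]
      omega
    have hR'l : R'.length = γ := by
      rw [hR'def, Walk.length_copy, Walk.length_cons, trG, Walk.length_transfer, hanc2]
      omega
    have heq := keyUnique hg R R' hRp hR'p (by omega)
    have hsup := congrArg Walk.support heq
    rw [hRdef, hR'def, Walk.support_copy, Walk.support_cons, Walk.support_cons,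
      trG, trG, Walk.support_transfer, Walk.support_transfer,
      Walk.support_eq_cons (ancW u hu), Walk.support_eq_cons (ancW u' hu')] at hsup
    simp only [List.cons.injEq] at hsup
    exact hsup.2.1
  set ancT : V → V := fun u => if h : f u = γ then ancV u h else u with hancTdef
  have hpairsγ_le : (pairs γ).card ≤ (L 1).card * T.card := by
    calc (pairs γ).card ≤ (L 1).card * ((pairs γ).image Prod.snd).card := by
          apply Finset.card_le_mul_card_image
          intro b hb
          rw [mem_image] at hb
          obtain ⟨p0, hp0, rfl⟩ := hb
          rw [hpairs_mem] at hp0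
          refine Finset.card_le_card_of_injOn (fun p => ancT p.1) ?_ ?_
          · intro p hp
            rw [Finset.mem_coe, mem_filter, hpairs_mem] at hp
            rw [Finset.mem_coe, hL1, mem_neighborFinset]
            have h := hp.1.1
            rw [hancTdef]
            simp only [h, dif_pos]
            exact dist_eq_one_iff_adj.mp (hanc1 p.1 h)
          · intro p hp q hq hEq
            rw [Finset.mem_coe, mem_filter, hpairs_mem] at hp hq
            rw [hancTdef] at hEq
            simp only [hp.1.1, hq.1.1, dif_pos] at hEq
            have h1 : p.1 = q.1 := by
              refine hancInj p0.2 p.1 q.1 hp0.2.2 ?_ ?_ hp.1.1 hq.1.1 hEq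
              · rw [← hp.2] at hp0 ⊢; exact hp.1.2.1
              · rw [← hq.2] at hp0 ⊢; exact hq.1.2.1
            have h2 : p.2 = q.2 := by rw [hp.2, hq.2]
            exact Prod.ext h1 h2
      _ ≤ (L 1).card * T.card := by
          apply Nat.mul_le_mul_left
          apply card_le_card
          intro b hb
          rw [mem_image] at hb
          obtain ⟨p0, hp0, rfl⟩ := hb
          rw [hpairs_mem] at hp0
          rw [hTdef, hLdef, mem_filter]
          exact ⟨mem_univ _, hp0.2.2⟩
  have hpairsγ_ge : (L 1).card * (d - 1) ^ γ ≤ (pairs γ).card := by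
    calc (L 1).card * (d - 1) ^ γ
        = ((L 1).card * (d - 1) ^ (γ - 1)) * (d - 1) := by
          rw [mul_assoc, ← pow_succ]
          congr 2
          omega
      _ ≤ (L γ).card * (d - 1) := Nat.mul_le_mul_right _ (hLgrow γ hγ le_rfl)
      _ ≤ (pairs γ).card := hpairs_lower γ hγ le_rfl
  have hTcard : (d - 1) ^ γ ≤ T.card := by
    have h1 : (L 1).card * (d - 1) ^ γ ≤ (L 1).card * T.card :=
      le_trans hpairsγ_ge hpairsγ_le
    exact Nat.le_of_mul_le_mul_left h1 (by omega)
  have hScard : d * (d - 1) ^ (γ - 1) ≤ S.card := by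
    calc d * (d - 1) ^ (γ - 1) ≤ (L 1).card * (d - 1) ^ (γ - 1) :=
          Nat.mul_le_mul_right _ hL1d
      _ ≤ (L γ).card := hLgrow γ hγ le_rfl
      _ ≤ S.card := by
          apply card_le_card
          intro u hu
          rw [hLdef, mem_filter] at hu
          rw [hSdef, mem_filter]
          exact ⟨mem_univ _, by omega⟩
  have hST : Disjoint S T := by
    rw [Finset.disjoint_left]
    intro u hu hut
    rw [hSdef, mem_filter] at hu
    rw [hTdef, hLdef, mem_filter] at hut
    omega
  refine ⟨levG G v γ, S, T, le_trans hg (egirth_anti (levG_le v)), ?_, hST, hScard, hTcard, ?_⟩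
  · -- edge count
    have hinj : (pairs γ).card ≤ (levG G v γ).edgeFinset.card := by
      apply Finset.card_le_card_of_injOn (fun p => s(p.1, p.2))
      · intro p hp
        rw [Finset.mem_coe, hpairs_mem] at hp
        simp only [Finset.mem_coe, mem_edgeFinset, mem_edgeSet]
        exact ⟨hp.2.1, Or.inl ⟨show f p.1 + 1 = f p.2 by omega,
          show 1 ≤ f p.1 by omega, show f p.2 ≤ γ + 1 by omega⟩⟩
      · intro p hp q hq hEq
        rw [Finset.mem_coe, hpairs_mem] at hp hq
        rw [Sym2.eq_iff] at hEq
        rcases hEq with ⟨h1, h2⟩ | ⟨h1, h2⟩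
        · exact Prod.ext h1 h2
        · exfalso
          have h3 : f q.2 = γ := h1 ▸ hp.1
          have h4 : f q.2 = γ + 1 := hq.2.2
          omega
    have hcount : d * (d - 1) ^ γ ≤ (levG G v γ).edgeFinset.card := by
      calc d * (d - 1) ^ γ ≤ (L 1).card * (d - 1) ^ γ := Nat.mul_le_mul_right _ hL1d
        _ ≤ (pairs γ).card := hpairsγ_ge
        _ ≤ _ := hinj
    rwa [Set.ncard_eq_toFinset_card', ← edgeFinset]
  · -- covering
    intro e he
    induction e with
    | _ x y =>
      rw [mem_edgeSet] at he
      have hchild' : ∀ x : V, 1 ≤ G.dist v x → G.dist v x ≤ γ →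
          ∃ w, G.Adj x w ∧ G.dist v w = G.dist v x + 1 := hchild
      rcases he.2 with ⟨h1, h2, h3⟩ | ⟨h1, h2, h3⟩
      · obtain ⟨a, t, ha, ht, hd, hreq⟩ := cover hg v hchild' he h1
        have ha' : f a = 1 := ha
        have ht' : f t = γ + 1 := ht
        refine ⟨a, ?_, t, ?_, hd, hreq⟩
        · rw [hSdef, mem_filter]; exact ⟨mem_univ _, by omega⟩
        · rw [hTdef, hLdef, mem_filter]; exact ⟨mem_univ _, ht'⟩
      · obtain ⟨a, t, ha, ht, hd, hreq⟩ := cover hg v hchild' he.symm h1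
        have ha' : f a = 1 := ha
        have ht' : f t = γ + 1 := ht
        refine ⟨a, ?_, t, ?_, hd, ?_⟩
        · rw [hSdef, mem_filter]; exact ⟨mem_univ _, by omega⟩
        · rw [hTdef, hLdef, mem_filter]; exact ⟨mem_univ _, ht'⟩
        · rw [Sym2.eq_swap] at hreq; exact hreq

end BFS

end Aux

theorem stmt_10 :
    ∀ γ : ℕ, 1 ≤ γ → ∀ i : ℕ, 1 ≤ i → i ≤ γ → ∀ c : ℝ, 0 < c →
    ∃ c' : ℝ, 0 < c' ∧ ∃ n₀ : ℕ, ∀ n : ℕ, n₀ ≤ n →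
      (∃ G : SimpleGraph (Fin n), ((2 * γ + 2 : ℕ) : ℕ∞) ≤ G.egirth ∧
          ∀ v : Fin n, c * (n : ℝ) ^ ((1 : ℝ) / (γ : ℝ)) ≤ ((G.neighborSet v).ncard : ℝ)) →
      ∃ (H : SimpleGraph (Fin n)) (S T : Finset (Fin n)),
        ((2 * γ + 2 : ℕ) : ℕ∞) ≤ H.egirth ∧
        c' * (n : ℝ) ^ (1 + (1 : ℝ) / (γ : ℝ)) ≤ (H.edgeSet.ncard : ℝ) ∧
        Disjoint S T ∧
        c' * (n : ℝ) ^ ((i : ℝ) / (γ : ℝ)) ≤ (S.card : ℝ) ∧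
        c' * (n : ℝ) ^ (((γ : ℝ) + 1 - (i : ℝ)) / (γ : ℝ)) ≤ (T.card : ℝ) ∧
        ∀ e ∈ H.edgeSet, ∃ s ∈ S, ∃ t ∈ T, H.dist s t = γ ∧ Requires H s t e := by
  intro γ hγ i hi1 hiγ c hc
  have hγR : (0 : ℝ) < (γ : ℝ) := by exact_mod_cast hγ
  have hc2 : (0 : ℝ) < c / 2 := by linarith
  refine ⟨min (c * (c / 2) ^ (γ - 1)) (min (c * (c / 2) ^ γ) ((c / 2) ^ γ)), ?_, ?_⟩
  · apply lt_min (by positivity) (lt_min (by positivity) (by positivity))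
  set c' := min (c * (c / 2) ^ (γ - 1)) (min (c * (c / 2) ^ γ) ((c / 2) ^ γ)) with hc'def
  have hc'1 : c' ≤ c * (c / 2) ^ (γ - 1) := min_le_left _ _
  have hc'2 : c' ≤ c * (c / 2) ^ γ := le_trans (min_le_right _ _) (min_le_left _ _)
  have hc'3 : c' ≤ (c / 2) ^ γ := le_trans (min_le_right _ _) (min_le_right _ _)
  refine ⟨max 1 ⌈(2 / c) ^ (γ : ℝ)⌉₊, ?_⟩
  intro n hn ⟨G, hgirth, hdeg⟩
  have hn1 : 1 ≤ n := le_trans (le_max_left _ _) hn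
  have hnR1 : (1 : ℝ) ≤ (n : ℝ) := by exact_mod_cast hn1
  have hnR0 : (0 : ℝ) ≤ (n : ℝ) := by linarith
  set X : ℝ := (n : ℝ) ^ ((1 : ℝ) / (γ : ℝ)) with hXdef
  have hXpos : 0 < X := Real.rpow_pos_of_pos (by linarith) _
  -- c * X ≥ 2
  have hcX2 : 2 ≤ c * X := by
    have h1 : ((2 / c) ^ (γ : ℝ) : ℝ) ≤ (n : ℝ) := by
      have h2 : (⌈(2 / c) ^ (γ : ℝ)⌉₊ : ℝ) ≤ (n : ℝ) := by
        exact_mod_cast le_trans (le_max_right _ _) hn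
      exact le_trans (Nat.le_ceil _) h2
    have h3 : ((2 / c) ^ (γ : ℝ)) ^ ((1 : ℝ) / (γ : ℝ)) ≤ X := by
      apply Real.rpow_le_rpow (by positivity) h1 (by positivity)
    rw [← Real.rpow_mul (by positivity)] at h3
    have h4 : (γ : ℝ) * (1 / (γ : ℝ)) = 1 := by field_simp
    rw [h4, Real.rpow_one] at h3
    have h5 : 2 / c ≤ X := h3
    rw [div_le_iff₀ hc] at h5
    linarith [h5]
  set d : ℕ := ⌈c * X⌉₊ with hddef
  have hdR : c * X ≤ (d : ℝ) := Nat.le_ceil _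
  have hd2 : 2 ≤ d := by
    have : (2 : ℝ) ≤ (d : ℝ) := by linarith
    exact_mod_cast this
  have hdm1R : c / 2 * X ≤ ((d - 1 : ℕ) : ℝ) := by
    rw [Nat.cast_sub (by omega)]
    push_cast
    linarith
  have hdeg' : ∀ x : Fin n, d ≤ (G.neighborSet x).ncard := by
    intro x
    rw [hddef, Nat.ceil_le]
    exact hdeg x
  have hv : 0 < n := hn1
  obtain ⟨H, S, T, hHg, hHe, hHd, hHS, hHT, hHcov⟩ :=
    main_structure hγ hgirth d hd2 hdeg' ⟨0, hv⟩
  -- power identities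
  have hXn : X ^ (γ : ℕ) = (n : ℝ) := by
    rw [hXdef, ← Real.rpow_natCast ((n:ℝ) ^ ((1:ℝ)/(γ:ℝ))) γ, ← Real.rpow_mul hnR0]
    rw [show (1 / (γ : ℝ)) * (γ : ℕ) = 1 by field_simp]
    exact Real.rpow_one _
  have hXn1 : X ^ (γ + 1 : ℕ) = (n : ℝ) ^ (1 + (1 : ℝ) / (γ : ℝ)) := by
    rw [hXdef, ← Real.rpow_natCast ((n:ℝ) ^ ((1:ℝ)/(γ:ℝ))) (γ+1), ← Real.rpow_mul hnR0]
    congr 1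
    push_cast
    field_simp
  refine ⟨H, S, T, hHg, ?_, hHd, ?_, ?_, hHcov⟩
  · -- edges
    calc c' * (n : ℝ) ^ (1 + (1 : ℝ) / (γ : ℝ))
        ≤ (c * (c / 2) ^ γ) * (n : ℝ) ^ (1 + (1 : ℝ) / (γ : ℝ)) := by
          apply mul_le_mul_of_nonneg_right hc'2 (by positivity)
      _ = (c * X) * ((c / 2) * X) ^ γ := by rw [← hXn1, mul_pow]; ring
      _ ≤ (d : ℝ) * (((d - 1 : ℕ) : ℝ)) ^ γ := by
          apply mul_le_mul hdR (pow_le_pow_left₀ (by positivity) hdm1R γ)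
            (by positivity) (by positivity)
      _ = ((d * (d - 1) ^ γ : ℕ) : ℝ) := by push_cast; ring
      _ ≤ ((H.edgeSet.ncard : ℕ) : ℝ) := by exact_mod_cast hHe
  · -- S
    calc c' * (n : ℝ) ^ ((i : ℝ) / (γ : ℝ))
        ≤ (c * (c / 2) ^ (γ - 1)) * (n : ℝ) ^ ((i : ℝ) / (γ : ℝ)) := by
          apply mul_le_mul_of_nonneg_right hc'1 (by positivity)
      _ ≤ (c * (c / 2) ^ (γ - 1)) * (n : ℝ) := by
          apply mul_le_mul_of_nonneg_left ?_ (by positivity)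
          have h1 : (n : ℝ) ^ ((i : ℝ) / (γ : ℝ)) ≤ (n : ℝ) ^ (1 : ℝ) := by
            apply Real.rpow_le_rpow_of_exponent_le hnR1
            rw [div_le_one hγR]
            exact_mod_cast hiγ
          rwa [Real.rpow_one] at h1
      _ = (c * X) * ((c / 2) * X) ^ (γ - 1) := by
          rw [← hXn, mul_pow]
          have : X ^ (γ : ℕ) = X ^ (γ - 1) * X := by
            rw [← pow_succ]
            congr 1
            omega
          rw [this]
          ring
      _ ≤ (d : ℝ) * (((d - 1 : ℕ) : ℝ)) ^ (γ - 1) := by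
          apply mul_le_mul hdR (pow_le_pow_left₀ (by positivity) hdm1R _)
            (by positivity) (by positivity)
      _ = ((d * (d - 1) ^ (γ - 1) : ℕ) : ℝ) := by push_cast; ring
      _ ≤ (S.card : ℝ) := by exact_mod_cast hHS
  · -- T
    calc c' * (n : ℝ) ^ (((γ : ℝ) + 1 - (i : ℝ)) / (γ : ℝ))
        ≤ ((c / 2) ^ γ) * (n : ℝ) ^ (((γ : ℝ) + 1 - (i : ℝ)) / (γ : ℝ)) := by
          apply mul_le_mul_of_nonneg_right hc'3 (by positivity)
      _ ≤ ((c / 2) ^ γ) * (n : ℝ) := by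
          apply mul_le_mul_of_nonneg_left ?_ (by positivity)
          have h1 : (n : ℝ) ^ (((γ : ℝ) + 1 - (i : ℝ)) / (γ : ℝ)) ≤ (n : ℝ) ^ (1 : ℝ) := by
            apply Real.rpow_le_rpow_of_exponent_le hnR1
            rw [div_le_one hγR]
            have : (1 : ℝ) ≤ (i : ℝ) := by exact_mod_cast hi1
            linarith
          rwa [Real.rpow_one] at h1
      _ = ((c / 2) * X) ^ γ := by rw [← hXn, mul_pow]
      _ ≤ (((d - 1 : ℕ) : ℝ)) ^ γ := pow_le_pow_left₀ (by positivity) hdm1R γ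
      _ = (((d - 1) ^ γ : ℕ) : ℝ) := by push_cast; ring
      _ ≤ (T.card : ℝ) := by exact_mod_cast hHT
end

section
/- For every integer γ ≥ 1 and reals c, C > 0 there exist c' > 0 and n₀ with the following property. Let n ≥ n₀ and let H = (V,E) be a graph on n vertices with girth at least 2γ + 2 and |E| ≥ c·n^{1 + 1/γ}, together with disjoint subsets S, T ⊆ V with |S|·|T| ≤ C·n^{1 + 1/γ}, such that every edge of H is required by some pair (s,t) ∈ S × T with dist_H(s,t) = γ. Then there exist a set P₁ ⊆ S × T with |P₁| ≥ c'·n^{1 + 1/γ}/γ³ and a map φ : P₁ → E such that for each (s,t) ∈ P₁: dist_H(s,t) = γ, the pair (s,t) requires the edge φ(s,t), and the unique shortest s–t path in H contains no edge of the form φ(s',t') with (s',t') ∈ P₁ \ {(s,t)}. -/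
open SimpleGraph

/-!
Let `σ e ∈ S × T` be a pair at distance `γ` requiring the edge `e`. A pair requires at most `γ`
edges (all lie on one shortest path), so there are at least `|E| / γ` distinct pairs `σ e`;
choose for each of them one edge `φ p` with `σ (φ p) = p`. Since the girth exceeds `2γ`, the
shortest path of each such pair is unique, so the relation "`p` requires `φ q`" has out-degree at
most `γ`. Its symmetrization is therefore `2γ`-degenerate, and a greedy independent set, of size
at least `|E| / (γ (2γ + 1))`, is the family `P₁`.
-/

open Finset

namespace Finset

variable {α : Type*} [DecidableEq α] (r : α → α → Prop) [DecidableRel r] (d : ℕ)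
  (A : Finset α)

theorem exists_card_filter_rel_or_rel_le (hA : ∀ v ∈ A, #{w ∈ A | r v w} ≤ d)
    (hne : A.Nonempty) : ∃ v ∈ A, #{w ∈ A | r v w ∨ r w v} ≤ 2 * d := by
  refine exists_le_of_sum_le hne ?_
  have hout : ∑ v ∈ A, #(A.bipartiteAbove r v) ≤ ∑ _v ∈ A, d := sum_le_sum hA
  calc ∑ v ∈ A, #{w ∈ A | r v w ∨ r w v}
      ≤ ∑ v ∈ A, (#(A.bipartiteAbove r v) + #(A.bipartiteBelow r v)) := by
        refine sum_le_sum fun v _ => ?_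
        rw [filter_or]
        exact card_union_le _ _
    _ = 2 * ∑ v ∈ A, #(A.bipartiteAbove r v) := by
        rw [sum_add_distrib, ← sum_card_bipartiteAbove_eq_sum_card_bipartiteBelow]
        ring
    _ ≤ ∑ _v ∈ A, 2 * d := by
        rw [← mul_sum]
        exact Nat.mul_le_mul_left 2 hout

theorem exists_pairwise_not_rel_card_le (hA : ∀ v ∈ A, #{w ∈ A | r v w} ≤ d) :
    ∃ B ⊆ A, (B : Set α).Pairwise (fun v w => ¬ r v w) ∧ #A ≤ (2 * d + 1) * #B := by
  induction A using Finset.strongInduction with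
  | H A ih =>
  rcases A.eq_empty_or_nonempty with rfl | hne
  · exact ⟨∅, empty_subset _, by simp, by simp⟩
  obtain ⟨v, hv, hvdeg⟩ := exists_card_filter_rel_or_rel_le r d A hA hne
  set N := insert v {w ∈ A | r v w ∨ r w v}
  have hA' : A \ N ⊂ A :=
    sdiff_ssubset (insert_subset hv (filter_subset _ _)) (insert_nonempty _ _)
  obtain ⟨B, hB, hBind, hBcard⟩ := ih (A \ N) hA' fun w hw =>
    (card_le_card (filter_subset_filter _ sdiff_subset)).trans (hA w (sdiff_subset hw))
  have hfar : ∀ w ∈ B, v ≠ w ∧ ¬ r v w ∧ ¬ r w v := fun w hw => by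
    have hw' := mem_sdiff.1 (hB hw)
    simp only [N, mem_insert, mem_filter, not_or] at hw'
    tauto
  have hvB : v ∉ B := fun h => (hfar v h).1 rfl
  refine ⟨insert v B, insert_subset hv (hB.trans hA'.subset), ?_, ?_⟩
  · rw [coe_insert, Set.pairwise_insert]
    exact ⟨hBind, fun w hw _ => (hfar w hw).2⟩
  · calc #A ≤ #(A \ N) + #N := card_le_card_sdiff_add_card
      _ ≤ (2 * d + 1) * #B + (2 * d + 1) :=
        add_le_add hBcard ((card_insert_le _ _).trans (by omega))
      _ = (2 * d + 1) * #(insert v B) := by rw [card_insert_of_notMem hvB]; ring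

end Finset

variable {V : Type*} {G : SimpleGraph V} {s t : V}

theorem SimpleGraph.Walk.eq_of_length_eq_dist_of_two_mul_dist_lt_egirth
    (hg : (2 * G.dist s t : ℕ∞) < G.egirth) {p q : G.Walk s t}
    (hp : p.length = G.dist s t) (hq : q.length = G.dist s t) : p = q := by
  by_contra hne
  obtain ⟨_, -, -, c, hc, hlen⟩ :=
    (p.isPath_of_length_eq_dist hp).exists_isCycle_length_le_add_of_ne
      (q.isPath_of_length_eq_dist hq) hne
  have hshort : (c.length : ℕ∞) ≤ 2 * G.dist s t := by
    exact_mod_cast (by omega : c.length ≤ 2 * G.dist s t)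
  exact (hg.trans_le ((egirth_le_length hc).trans hshort)).false

theorem requires_of_mem_edges (hg : (2 * G.dist s t : ℕ∞) < G.egirth) {p : G.Walk s t}
    (hp : p.length = G.dist s t) {e : Sym2 V} (he : e ∈ p.edges) : Requires G s t e :=
  fun _ hq => Walk.eq_of_length_eq_dist_of_two_mul_dist_lt_egirth hg hp hq ▸ he

theorem card_le_dist_of_forall_requires [DecidableEq V] (hr : G.Reachable s t)
    {A : Finset (Sym2 V)} (hA : ∀ e ∈ A, Requires G s t e) : #A ≤ G.dist s t := by
  obtain ⟨p, hp⟩ := hr.exists_walk_length_eq_dist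
  calc #A ≤ #p.edges.toFinset := card_le_card fun e he => List.mem_toFinset.2 (hA e he p hp)
    _ ≤ p.edges.length := List.toFinset_card_le _
    _ = G.dist s t := by rw [Walk.length_edges, hp]

theorem ncard_edgeSet_le_mul_card_image [DecidableEq V] [Fintype G.edgeSet] {γ : ℕ}
    (hγ : γ ≠ 0) (σ : G.edgeSet → V × V)
    (hσ : ∀ e, G.dist (σ e).1 (σ e).2 = γ ∧ Requires G (σ e).1 (σ e).2 e) :
    G.edgeSet.ncard ≤ γ * #(univ.image σ) := by
  rw [← Nat.card_coe_set_eq, Nat.card_eq_fintype_card, ← card_univ]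
  refine card_le_mul_card_image _ γ fun p hp => ?_
  obtain ⟨e₀, -, rfl⟩ := mem_image.1 hp
  rw [← card_map (Function.Embedding.subtype _), ← (hσ e₀).1]
  refine card_le_dist_of_forall_requires (.of_dist_ne_zero ((hσ e₀).1 ▸ hγ)) fun e he => ?_
  obtain ⟨e', he', rfl⟩ := mem_map.1 he
  exact (mem_filter.1 he').2 ▸ (hσ e').2

theorem exists_pairs_with_private_edges [DecidableEq V] [Fintype G.edgeSet]
    {γ : ℕ} (hγ : γ ≠ 0) (hg : (2 * γ : ℕ∞) < G.egirth) (σ : G.edgeSet → V × V)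
    (hσ : ∀ e, G.dist (σ e).1 (σ e).2 = γ ∧ Requires G (σ e).1 (σ e).2 e) :
    ∃ P₁ ⊆ univ.image σ, ∃ φ : V × V → Sym2 V,
      G.edgeSet.ncard ≤ γ * ((2 * γ + 1) * #P₁) ∧
      ∀ p ∈ P₁, G.dist p.1 p.2 = γ ∧ φ p ∈ G.edgeSet ∧ Requires G p.1 p.2 (φ p) ∧
        ∀ w : G.Walk p.1 p.2, w.length = G.dist p.1 p.2 →
          ∀ q ∈ P₁, q ≠ p → φ q ∉ w.edges := by
  classical
  set P₀ := univ.image σ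
  have hdist : ∀ p ∈ P₀, G.dist p.1 p.2 = γ := forall_mem_image.2 fun e _ => (hσ e).1
  have hreach (p) (hp : p ∈ P₀) : G.Reachable p.1 p.2 :=
    Reachable.of_dist_ne_zero (hdist p hp ▸ hγ)
  have hrep (p : V × V) :
      ∃ e : Sym2 V, p ∈ P₀ → ∃ he : e ∈ G.edgeSet, σ ⟨e, he⟩ = p := by
    by_cases hp : p ∈ P₀
    · obtain ⟨e, -, rfl⟩ := mem_image.1 hp
      exact ⟨e, fun _ => ⟨e.2, rfl⟩⟩
    · exact ⟨s(p.1, p.1), fun h => absurd h hp⟩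
  choose φ hφ using hrep
  have hφreq (p) (hp : p ∈ P₀) : Requires G p.1 p.2 (φ p) := by
    obtain ⟨he, hσφ⟩ := hφ p hp
    simpa only [hσφ] using (hσ ⟨φ p, he⟩).2
  have hφinj : Set.InjOn φ P₀ := fun p hp q hq hpq => by
    obtain ⟨hep, hσp⟩ := hφ p hp
    obtain ⟨heq, hσq⟩ := hφ q hq
    rw [← hσp, ← hσq]
    exact congrArg σ (Subtype.ext hpq)
  have hdeg : ∀ p ∈ P₀, #{q ∈ P₀ | Requires G p.1 p.2 (φ q)} ≤ γ := by
    intro p hp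
    rw [← card_image_of_injOn (hφinj.mono (filter_subset _ _))]
    refine hdist p hp ▸ card_le_dist_of_forall_requires (hreach p hp) fun e he => ?_
    obtain ⟨q, hq, rfl⟩ := mem_image.1 he
    exact (mem_filter.1 hq).2
  obtain ⟨P₁, hP₁, hind, hcard⟩ :=
    exists_pairwise_not_rel_card_le (fun p q => Requires G p.1 p.2 (φ q)) γ P₀ hdeg
  refine ⟨P₁, hP₁, φ, (ncard_edgeSet_le_mul_card_image hγ σ hσ).trans
    (Nat.mul_le_mul_left γ hcard), fun p hp => ?_⟩
  have hp₀ := hP₁ hp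
  refine ⟨hdist p hp₀, (hφ p hp₀).1, hφreq p hp₀, fun w hw q hq hqp he => ?_⟩
  exact hind hp hq hqp.symm (requires_of_mem_edges (hdist p hp₀ ▸ hg) hw he)

theorem stmt_11 :
    ∀ γ : ℕ, 1 ≤ γ → ∀ c C : ℝ, 0 < c → 0 < C →
    ∃ c' : ℝ, 0 < c' ∧ ∃ n₀ : ℕ, ∀ n : ℕ, n₀ ≤ n →
      ∀ (H : SimpleGraph (Fin n)) (S T : Finset (Fin n)),
        ((2 * γ + 2 : ℕ) : ℕ∞) ≤ H.egirth →
        c * (n : ℝ) ^ (1 + (1 : ℝ) / (γ : ℝ)) ≤ (H.edgeSet.ncard : ℝ) →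
        Disjoint S T →
        ((S.card : ℝ) * (T.card : ℝ)) ≤ C * (n : ℝ) ^ (1 + (1 : ℝ) / (γ : ℝ)) →
        (∀ e ∈ H.edgeSet, ∃ s ∈ S, ∃ t ∈ T, H.dist s t = γ ∧ Requires H s t e) →
        ∃ (P₁ : Finset (Fin n × Fin n)) (φ : Fin n × Fin n → Sym2 (Fin n)),
          P₁ ⊆ S ×ˢ T ∧
          c' * (n : ℝ) ^ (1 + (1 : ℝ) / (γ : ℝ)) / (γ : ℝ) ^ 3 ≤ (P₁.card : ℝ) ∧
          ∀ pq ∈ P₁,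
            H.dist pq.1 pq.2 = γ ∧
            φ pq ∈ H.edgeSet ∧
            Requires H pq.1 pq.2 (φ pq) ∧
            ∀ p : H.Walk pq.1 pq.2, p.length = H.dist pq.1 pq.2 →
              ∀ pq' ∈ P₁, pq' ≠ pq → φ pq' ∉ p.edges := by
  intro γ hγ c C hc _
  refine ⟨c / 3, by positivity, 0, fun n _ H S T hg hE _ _ hreq => ?_⟩
  classical
  have hg' : (2 * γ : ℕ∞) < H.egirth := lt_of_lt_of_le (by norm_cast; omega) hg
  choose s hs t ht hσ using fun e : H.edgeSet => hreq e e.2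
  obtain ⟨P₁, hP₁, φ, hcard, hφ⟩ :=
    exists_pairs_with_private_edges (by omega) hg' (fun e => (s e, t e)) hσ
  have hST : univ.image (fun e => (s e, t e)) ⊆ S ×ˢ T :=
    image_subset_iff.2 fun e _ => mem_product.2 ⟨hs e, ht e⟩
  refine ⟨P₁, φ, hP₁.trans hST, ?_, hφ⟩
  have hγ1 : (1 : ℝ) ≤ γ := by exact_mod_cast hγ
  have hcube : (γ : ℝ) * (2 * γ + 1) ≤ 3 * γ ^ 3 := by
    nlinarith [mul_nonneg (sub_nonneg.2 hγ1) (sq_nonneg (γ : ℝ))]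
  have hP₁ : (H.edgeSet.ncard : ℝ) ≤ 3 * (γ : ℝ) ^ 3 * #P₁ :=
    calc (H.edgeSet.ncard : ℝ) ≤ γ * ((2 * γ + 1) * #P₁) := by exact_mod_cast hcard
      _ ≤ 3 * (γ : ℝ) ^ 3 * #P₁ := by nlinarith [(#P₁).cast_nonneg (α := ℝ)]
  rw [div_le_iff₀ (by positivity)]
  linarith
end

section
/- For every integer γ ≥ 1 there is a constant C > 0 such that every connected graph G on n vertices with girth at least 2γ + 1 admits an emulator H with at most C·n^{1 + 1/(2γ + 1)} edges satisfying dist_H(u,v) ≤ dist_G(u,v) + 4γ for all vertices u, v. -/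
/-!
Let `d = ⌈n ^ (1 / (2γ + 1))⌉`. Greedily choose centres whose `γ`-balls contain at least `d ^ γ`
vertices not yet covered, so that there are at most `n / d ^ γ` centres. The emulator joins every
covered vertex `x` to its centre `f x`, joins all centres pairwise (at most `n² / d ^ (2γ) ≤ n d`
edges), and keeps the `G`-edges at the set `U` of uncovered vertices. Those inside `U` and those
leaving `U` each form a `d`-degenerate graph: as the girth exceeds `2γ`, the non-backtracking walks
of length `γ` in a part of minimum degree `> d` end at `d ^ γ` distinct vertices, which can be
made to lie in `U`, whereas every `γ`-ball contains fewer than `d ^ γ` vertices of `U`. A shortest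
path is followed along kept edges from both ends; the middle piece between the first vertices
`a, b` outside `U` is replaced by `a → f a → f b → b`, at an extra cost of `4γ`.
-/

open SimpleGraph

/-- The total weight of a walk, for an edge-weight function `w`. -/
def walkWeight {V : Type*} {G : SimpleGraph V} (w : Sym2 V → ℕ) {u v : V} (p : G.Walk u v) : ℕ :=
  (p.edges.map w).sum

/-- The weighted distance between two vertices: the minimum total weight of a walk. -/
noncomputable def wdist {V : Type*} (G : SimpleGraph V) (w : Sym2 V → ℕ) (u v : V) : ℕ :=
  sInf {m : ℕ | ∃ p : G.Walk u v, walkWeight w p = m}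

/-- The weight that an emulator of `G` assigns to an emulator edge `{u, v}`,
namely `dist_G(u, v)`. -/
noncomputable def emuWeight {V : Type*} (G : SimpleGraph V) : Sym2 V → ℕ :=
  Sym2.lift ⟨fun u v => G.dist u v, fun _ _ => SimpleGraph.dist_comm⟩

open Finset

section WalkWeight

variable {V : Type*} {G : SimpleGraph V} {w : Sym2 V → ℕ} {u v x : V}

@[simp]
lemma walkWeight_nil : walkWeight w (Walk.nil : G.Walk u u) = 0 := rfl

@[simp]
lemma walkWeight_cons (h : G.Adj u x) (p : G.Walk x v) :
    walkWeight w (Walk.cons h p) = w s(u, x) + walkWeight w p := by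
  simp [walkWeight]

@[simp]
lemma walkWeight_append (p : G.Walk u x) (q : G.Walk x v) :
    walkWeight w (p.append q) = walkWeight w p + walkWeight w q := by
  simp [walkWeight]

@[simp]
lemma walkWeight_reverse (p : G.Walk u v) : walkWeight w p.reverse = walkWeight w p := by
  simp [walkWeight, List.sum_reverse]

lemma wdist_le_walkWeight (p : G.Walk u v) : wdist G w u v ≤ walkWeight w p :=
  Nat.sInf_le ⟨p, rfl⟩

@[simp]
lemma emuWeight_mk (G : SimpleGraph V) (a b : V) : emuWeight G s(a, b) = G.dist a b := rfl

lemma exists_walk_emuWeight_le_dist {H : SimpleGraph V} (h : H.Adj u v ∨ u = v) :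
    ∃ q : H.Walk u v, walkWeight (emuWeight G) q ≤ G.dist u v := by
  rcases h with h | rfl
  · exact ⟨Walk.cons h Walk.nil, by simp⟩
  · exact ⟨Walk.nil, by simp⟩

end WalkWeight

namespace SimpleGraph

variable {V : Type*} {G : SimpleGraph V}

lemma fromRel_adj_or_eq {r : V → V → Prop} {x y : V} (h : r x y) :
    (fromRel r).Adj x y ∨ x = y := by
  by_cases hxy : x = y
  · exact .inr hxy
  · exact .inl ((fromRel_adj r x y).2 ⟨hxy, .inl h⟩)

/-- Two distinct paths with the same ends close up to a cycle using only their edges. -/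
theorem Walk.IsPath.eq_of_length_add_lt_egirth {a b : V} {p q : G.Walk a b} (hp : p.IsPath)
    (hq : q.IsPath) (hlen : ((p.length + q.length : ℕ) : ℕ∞) < G.egirth) : p = q := by
  set B := fromEdgeSet {e | e ∈ p.edges ∨ e ∈ q.edges}
  have hBG : B ≤ G := fun x y hxy => by
    rcases ((fromEdgeSet_adj _).1 hxy).1 with h | h
    exacts [p.adj_of_mem_edges h, q.adj_of_mem_edges h]
  have hpB : ∀ e ∈ p.edges, e ∈ B.edgeSet := fun e he => by
    rw [edgeSet_fromEdgeSet]
    exact ⟨.inl he, G.not_isDiag_of_mem_edgeSet (p.edges_subset_edgeSet he)⟩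
  have hqB : ∀ e ∈ q.edges, e ∈ B.edgeSet := fun e he => by
    rw [edgeSet_fromEdgeSet]
    exact ⟨.inr he, G.not_isDiag_of_mem_edgeSet (q.edges_subset_edgeSet he)⟩
  by_cases hB : B.IsAcyclic
  · have h := congrArg Subtype.val ((hB.subsingleton_path a b).elim
      ⟨p.transfer B hpB, hp.transfer hpB⟩ ⟨q.transfer B hqB, hq.transfer hqB⟩)
    have := congrArg (fun r : B.Walk a b =>
      r.transfer G fun e he => edgeSet_mono hBG (r.edges_subset_edgeSet he)) h
    simpa only [Walk.transfer_transfer, Walk.transfer_self] using this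
  · obtain ⟨c0, c, hc⟩ : ∃ c0 : V, ∃ c : B.Walk c0 c0, c.IsCycle := by
      simpa [IsAcyclic] using hB
    have hcB : c.edges ⊆ p.edges ++ q.edges := fun e he => by
      have := c.edges_subset_edgeSet he
      rw [edgeSet_fromEdgeSet] at this
      simpa using this.1
    have hclen : c.length ≤ p.length + q.length := by
      simpa using (hc.edges_nodup.subperm hcB).length_le
    have := (egirth_anti hBG).trans (egirth_le_length hc)
    exact absurd (hlen.trans_le this) (by exact_mod_cast hclen.not_gt)

section Finite

variable [Fintype V] [DecidableEq V]

lemma card_edgeFinset_fromRel_le (r : V → V → Prop) [DecidableRel r]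
    [DecidableRel (fromRel r).Adj] : #(fromRel r).edgeFinset ≤ #{p : V × V | r p.1 p.2} := by
  refine (card_le_card (s := (fromRel r).edgeFinset)
    (t := ({p : V × V | r p.1 p.2} : Finset _).image fun p => s(p.1, p.2))
    fun e he => ?_).trans card_image_le
  induction e with
  | h x y =>
    obtain ⟨-, hxy | hyx⟩ := (fromRel_adj r x y).1 (mem_edgeFinset.1 he)
    · exact mem_image.2 ⟨(x, y), by simpa using hxy, rfl⟩
    · exact mem_image.2 ⟨(y, x), by simpa using hyx, Sym2.eq_swap⟩

lemma card_edgeFinset_le_of_forall_exists_degree_le (B : SimpleGraph V) [DecidableRel B.Adj]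
    (k : ℕ) (h : ∀ s : Finset V, s.Nonempty → ∃ x ∈ s, #(B.neighborFinset x ∩ s) ≤ k) :
    #B.edgeFinset ≤ k * Fintype.card V := by
  suffices ∀ s : Finset V, #{e ∈ B.edgeFinset | ∀ v ∈ e, v ∈ s} ≤ k * #s by
    simpa using this univ
  intro s
  induction s using Finset.strongInduction with
  | H s ih =>
    obtain rfl | hs := s.eq_empty_or_nonempty
    · simpa [filter_eq_empty_iff] using fun e (_ : e ∈ B.edgeSet) => ⟨_, Sym2.out_fst_mem e⟩
    obtain ⟨x, hxs, hdeg⟩ := h s hs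
    have hsub : {e ∈ B.edgeFinset | ∀ v ∈ e, v ∈ s} ⊆
        {e ∈ B.edgeFinset | ∀ v ∈ e, v ∈ s.erase x} ∪
          (B.neighborFinset x ∩ s).image (fun y => s(x, y)) := by
      intro e he
      rw [mem_filter] at he
      by_cases hx : x ∈ e
      · obtain ⟨y, rfl⟩ := Sym2.mem_iff_exists.1 hx
        refine mem_union_right _ (mem_image.2 ⟨y, ?_, rfl⟩)
        exact mem_inter.2 ⟨(mem_neighborFinset _ _ _).2 (mem_edgeFinset.1 he.1), he.2 y (by simp)⟩
      · exact mem_union_left _ (mem_filter.2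
          ⟨he.1, fun v hv => mem_erase.2 ⟨fun hvx => hx (hvx ▸ hv), he.2 v hv⟩⟩)
    have hx := card_erase_add_one hxs
    calc _ ≤ k * #(s.erase x) + k :=
          (card_le_card hsub).trans ((card_union_le _ _).trans (add_le_add
            (ih _ (erase_ssubset hxs)) (card_image_le.trans hdeg)))
      _ = k * #s := by rw [← hx, mul_add_one]

end Finite

end SimpleGraph

section Chains

variable {V : Type*} [Fintype V] [DecidableEq V] (B : SimpleGraph V) [DecidableRel B.Adj]
  (s : Finset V) (r : V)

def chainStep (q : V × List V) : Finset (V × List V) :=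
  ((B.neighborFinset q.1 ∩ s).erase (q.2.headD q.1)).image fun z => (z, q.1 :: q.2)

/-- `(x, l) ∈ nonBacktrackingChains B s r j` encodes a non-backtracking walk of length `j` in `B`
from `r` to `x` inside `s`, whose support read backwards is `x :: l`. -/
def nonBacktrackingChains : ℕ → Finset (V × List V)
  | 0 => {(r, [])}
  | j + 1 => (nonBacktrackingChains j).biUnion (chainStep B s)

variable {B s r}

lemma mem_nonBacktrackingChains_succ {j : ℕ} {q : V × List V} :
    q ∈ nonBacktrackingChains B s r (j + 1) ↔ ∃ p ∈ nonBacktrackingChains B s r j,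
      B.Adj p.1 q.1 ∧ q.1 ∈ s ∧ q.1 ≠ p.2.headD p.1 ∧ q.2 = p.1 :: p.2 := by
  simp only [nonBacktrackingChains, chainStep, mem_biUnion, mem_image, mem_erase, mem_inter,
    mem_neighborFinset]
  constructor
  · rintro ⟨p, hp, z, ⟨hne, hadj, hzs⟩, rfl⟩
    exact ⟨p, hp, hadj, hzs, hne, rfl⟩
  · rintro ⟨p, hp, hadj, hs, hne, hq⟩
    exact ⟨p, hp, q.1, ⟨hne, hadj, hs⟩, Prod.ext rfl hq.symm⟩

lemma fst_mem_of_mem_nonBacktrackingChains (hr : r ∈ s) :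
    ∀ {j : ℕ} {q : V × List V}, q ∈ nonBacktrackingChains B s r j → q.1 ∈ s
  | 0, q, hq => by rw [nonBacktrackingChains, mem_singleton] at hq; subst hq; exact hr
  | _ + 1, _, hq => by
    obtain ⟨-, -, -, hs, -⟩ := mem_nonBacktrackingChains_succ.1 hq
    exact hs

lemma exists_walk_of_mem_nonBacktrackingChains :
    ∀ {j : ℕ} {q : V × List V}, q ∈ nonBacktrackingChains B s r j →
      ∃ w : B.Walk q.1 r, w.support = q.1 :: q.2 ∧ w.length = j
  | 0, q, hq => by
    rw [nonBacktrackingChains, mem_singleton] at hq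
    subst hq
    exact ⟨Walk.nil, rfl, rfl⟩
  | _ + 1, q, hq => by
    obtain ⟨p, hp, hadj, -, -, hq2⟩ := mem_nonBacktrackingChains_succ.1 hq
    obtain ⟨w, hw, hlen⟩ := exists_walk_of_mem_nonBacktrackingChains hp
    exact ⟨Walk.cons hadj.symm w, by simp [hw, hq2], by simp [hlen]⟩

lemma pow_le_card_nonBacktrackingChains {δ : ℕ} (hδ : ∀ x ∈ s, δ < #(B.neighborFinset x ∩ s))
    (hr : r ∈ s) : ∀ j, δ ^ j ≤ #(nonBacktrackingChains B s r j)
  | 0 => by simp [nonBacktrackingChains]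
  | j + 1 => by
    have hdisj : (nonBacktrackingChains B s r j : Set (V × List V)).PairwiseDisjoint
        (chainStep B s) := by
      intro p _ p' _ hne
      rw [Function.onFun, Finset.disjoint_left]
      intro q hq hq'
      apply hne
      simp only [chainStep, mem_image] at hq hq'
      obtain ⟨z, -, rfl⟩ := hq
      obtain ⟨z', -, h⟩ := hq'
      have h := (Prod.ext_iff.1 h).2
      exact Prod.ext (List.head_eq_of_cons_eq h).symm (List.tail_eq_of_cons_eq h).symm
    have hstep : ∀ p ∈ nonBacktrackingChains B s r j, δ ≤ #(chainStep B s p) := fun p hp => by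
      rw [chainStep, card_image_of_injective _ fun z z' h => (Prod.ext_iff.1 h).1]
      have := hδ p.1 (fst_mem_of_mem_nonBacktrackingChains hr hp)
      have := pred_card_le_card_erase (s := B.neighborFinset p.1 ∩ s) (a := p.2.headD p.1)
      omega
    rw [nonBacktrackingChains, card_biUnion hdisj, pow_succ]
    calc δ ^ j * δ ≤ #(nonBacktrackingChains B s r j) * δ :=
          Nat.mul_le_mul_right δ (pow_le_card_nonBacktrackingChains hδ hr j)
      _ ≤ _ := by simpa using card_nsmul_le_sum _ _ _ hstep

/-- Below the girth, a non-backtracking walk cannot revisit a vertex: the first return would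
close a cycle that is too short. -/
lemma nodup_of_mem_nonBacktrackingChains :
    ∀ {j : ℕ}, (j : ℕ∞) < B.egirth → ∀ {q : V × List V},
      q ∈ nonBacktrackingChains B s r j → (q.1 :: q.2).Nodup
  | 0, _, q, hq => by rw [nonBacktrackingChains, mem_singleton] at hq; subst hq; simp
  | j + 1, hj, q, hq => by
    obtain ⟨p, hp, hadj, -, hnb, hq2⟩ := mem_nonBacktrackingChains_succ.1 hq
    have hpnd := nodup_of_mem_nonBacktrackingChains
      (lt_of_le_of_lt (by exact_mod_cast j.le_succ) hj) hp
    obtain ⟨w, hw, hwlen⟩ := exists_walk_of_mem_nonBacktrackingChains hp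
    rw [hq2, List.nodup_cons]
    refine ⟨fun hmem => ?_, hpnd⟩
    rw [← hw] at hmem hpnd
    have hwp : w.IsPath := (Walk.isPath_def w).2 hpnd
    have hedge : (Walk.cons hadj Walk.nil : B.Walk p.1 q.1).IsPath := by simp [hadj.ne]
    have htake := (hwp.takeUntil hmem).eq_of_length_add_lt_egirth hedge (by
      have := w.length_takeUntil_le_length hmem
      simp only [Walk.length_cons, Walk.length_nil]
      exact lt_of_le_of_lt (by exact_mod_cast (by omega : _ ≤ j + 1)) hj)
    apply hnb
    have hsupp := congrArg Walk.support (w.take_spec hmem)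
    rw [htake, hw] at hsupp
    simp only [Walk.cons_append, Walk.nil_append, Walk.support_cons] at hsupp
    rw [← List.tail_eq_of_cons_eq hsupp, ← Walk.cons_tail_support]
    rfl

lemma injOn_fst_nonBacktrackingChains {j : ℕ} (hj : ((2 * j : ℕ) : ℕ∞) < B.egirth) :
    Set.InjOn Prod.fst (nonBacktrackingChains B s r j : Set (V × List V)) := by
  intro q hq q' hq' hfst
  obtain ⟨x, l⟩ := q
  obtain ⟨x', l'⟩ := q'
  simp only at hfst
  subst hfst
  have hj' : (j : ℕ∞) < B.egirth := lt_of_le_of_lt (by exact_mod_cast (by omega)) hj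
  obtain ⟨w, hw, hwlen⟩ := exists_walk_of_mem_nonBacktrackingChains hq
  obtain ⟨w', hw', hwlen'⟩ := exists_walk_of_mem_nonBacktrackingChains hq'
  have hp := (Walk.isPath_def w).2 (hw ▸ nodup_of_mem_nonBacktrackingChains hj' hq)
  have hp' := (Walk.isPath_def w').2 (hw' ▸ nodup_of_mem_nonBacktrackingChains hj' hq')
  have := congrArg Walk.support
    (hp.eq_of_length_add_lt_egirth hp' (by rwa [hwlen, hwlen', ← two_mul]))
  rw [hw, hw'] at this
  simp only at this
  rw [List.tail_eq_of_cons_eq this]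

lemma dist_le_of_mem_nonBacktrackingChains {G : SimpleGraph V} (hBG : B ≤ G) {j : ℕ}
    {q : V × List V} (hq : q ∈ nonBacktrackingChains B s r j) : G.dist r q.1 ≤ j := by
  obtain ⟨w, -, hwlen⟩ := exists_walk_of_mem_nonBacktrackingChains hq
  rw [dist_comm, ← hwlen, ← w.length_mapLe hBG]
  exact dist_le _

lemma pow_le_card_image_fst_nonBacktrackingChains {δ j : ℕ}
    (hδ : ∀ x ∈ s, δ < #(B.neighborFinset x ∩ s)) (hr : r ∈ s)
    (hj : ((2 * j : ℕ) : ℕ∞) < B.egirth) :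
    δ ^ j ≤ #((nonBacktrackingChains B s r j).image Prod.fst) := by
  rw [card_image_of_injOn (injOn_fst_nonBacktrackingChains hj)]
  exact pow_le_card_nonBacktrackingChains hδ hr j

lemma mem_iff_even_of_mem_nonBacktrackingChains {U : Set V}
    (hU : ∀ x y, B.Adj x y → (x ∈ U ↔ y ∉ U)) :
    ∀ {j : ℕ} {q : V × List V}, q ∈ nonBacktrackingChains B s r j → (q.1 ∈ U ↔ (r ∈ U ↔ Even j))
  | 0, q, hq => by rw [nonBacktrackingChains, mem_singleton] at hq; subst hq; simp
  | j + 1, q, hq => by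
    obtain ⟨p, hp, hadj, -⟩ := mem_nonBacktrackingChains_succ.1 hq
    have := mem_iff_even_of_mem_nonBacktrackingChains hU hp
    have := hU _ _ hadj
    rw [Nat.even_add_one]
    tauto

end Chains

section Clustering

variable {V : Type*} [DecidableEq V]

lemma exists_centres (G : SimpleGraph V) (γ : ℕ) {T : ℕ} (hT : 0 < T) (U₀ : Finset V) :
    ∃ (U D : Finset V) (f : V → V), (∀ v, #{x ∈ U | G.dist v x ≤ γ} < T) ∧
      (∀ x ∈ U₀ \ U, f x ∈ D ∧ G.dist x (f x) ≤ γ) ∧ #D * T ≤ #U₀ := by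
  induction U₀ using Finset.strongInduction with
  | H U₀ ih =>
    by_cases hbig : ∃ v, T ≤ #{x ∈ U₀ | G.dist v x ≤ γ}
    · obtain ⟨v, hv⟩ := hbig
      obtain ⟨y, hy⟩ : ({x ∈ U₀ | G.dist v x ≤ γ}).Nonempty := card_pos.1 (hT.trans_le hv)
      have hss : {x ∈ U₀ | ¬ G.dist v x ≤ γ} ⊂ U₀ :=
        (filter_ssubset).2 ⟨y, (mem_filter.1 hy).1, not_not.2 (mem_filter.1 hy).2⟩
      obtain ⟨U, D, f, hU, hf, hD⟩ := ih _ hss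
      refine ⟨U, insert v D, fun x => if G.dist v x ≤ γ then v else f x, hU, ?_, ?_⟩
      · intro x hx
        rw [mem_sdiff] at hx
        dsimp only
        split_ifs with hvx
        · exact ⟨mem_insert_self v D, dist_comm.trans_le hvx⟩
        · obtain ⟨hfD, hfx⟩ := hf x (mem_sdiff.2 ⟨mem_filter.2 ⟨hx.1, hvx⟩, hx.2⟩)
          exact ⟨mem_insert_of_mem hfD, hfx⟩
      · have := card_insert_le v D
        have := card_filter_add_card_filter_not (s := U₀) (fun x => G.dist v x ≤ γ)
        nlinarith
    · simp only [not_exists, not_le] at hbig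
      exact ⟨U₀, ∅, id, hbig, by simp, by simp⟩

end Clustering

section Routing

variable {V : Type*} {G H : SimpleGraph V} {U D : Set V} {f : V → V} {γ : ℕ}

lemma exists_walk_le_length_or_exit (hU : ∀ x y, G.Adj x y → x ∈ U → H.Adj x y) :
    ∀ {u v : V} (p : G.Walk u v),
      (∃ q : H.Walk u v, walkWeight (emuWeight G) q ≤ p.length) ∨
      ∃ a ∉ U, ∃ (q : H.Walk u a) (p' : G.Walk a v),
        walkWeight (emuWeight G) q + p'.length ≤ p.length
  | u, _, .nil => by
    by_cases hu : u ∈ U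
    · exact .inl ⟨.nil, by simp⟩
    · exact .inr ⟨u, hu, .nil, .nil, by simp⟩
  | u, _, .cons hadj p => by
    by_cases hu : u ∈ U
    · have hw : emuWeight G s(u, _) = 1 := dist_eq_one_iff_adj.2 hadj
      rcases exists_walk_le_length_or_exit hU p with ⟨q, hq⟩ | ⟨a, ha, q, p', hq⟩
      · exact .inl ⟨.cons (hU _ _ hadj hu) q,
          by simp only [walkWeight_cons, hw, Walk.length_cons]; omega⟩
      · exact .inr ⟨a, ha, .cons (hU _ _ hadj hu) q, p',
          by simp only [walkWeight_cons, hw, Walk.length_cons]; omega⟩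
    · exact .inr ⟨u, hu, .nil, .cons hadj p, by simp⟩

lemma exists_walk_le_dist_add_of_notMem (hconn : G.Connected)
    (hf : ∀ x ∉ U, (H.Adj x (f x) ∨ x = f x) ∧ f x ∈ D ∧ G.dist x (f x) ≤ γ)
    (hD : ∀ x ∈ D, ∀ y ∈ D, H.Adj x y ∨ x = y) {a b : V} (ha : a ∉ U) (hb : b ∉ U) :
    ∃ q : H.Walk a b, walkWeight (emuWeight G) q ≤ G.dist a b + 4 * γ := by
  obtain ⟨haf, hfaD, hfa⟩ := hf a ha
  obtain ⟨hbf, hfbD, hfb⟩ := hf b hb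
  obtain ⟨qa, hqa⟩ := exists_walk_emuWeight_le_dist (G := G) haf
  obtain ⟨qb, hqb⟩ := exists_walk_emuWeight_le_dist (G := G) hbf
  obtain ⟨qD, hqD⟩ := exists_walk_emuWeight_le_dist (G := G) (hD _ hfaD _ hfbD)
  have hcentres : G.dist (f a) (f b) ≤ γ + G.dist a b + γ := calc
    G.dist (f a) (f b) ≤ G.dist (f a) a + G.dist a b + G.dist b (f b) :=
        hconn.dist_triangle.trans (by grw [hconn.dist_triangle])
    _ ≤ γ + G.dist a b + γ := by rw [dist_comm]; omega
  refine ⟨qa.append (qD.append qb.reverse), ?_⟩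
  simp only [walkWeight_append, walkWeight_reverse]
  omega

lemma exists_walk_le_dist_add (hconn : G.Connected) (hU : ∀ x y, G.Adj x y → x ∈ U → H.Adj x y)
    (hf : ∀ x ∉ U, (H.Adj x (f x) ∨ x = f x) ∧ f x ∈ D ∧ G.dist x (f x) ≤ γ)
    (hD : ∀ x ∈ D, ∀ y ∈ D, H.Adj x y ∨ x = y) (u v : V) :
    ∃ q : H.Walk u v, walkWeight (emuWeight G) q ≤ G.dist u v + 4 * γ := by
  obtain ⟨p, hp⟩ := hconn.exists_walk_length_eq_dist u v
  rcases exists_walk_le_length_or_exit hU p with ⟨q, hq⟩ | ⟨a, ha, q₁, p₁, h₁⟩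
  · exact ⟨q, by omega⟩
  rcases exists_walk_le_length_or_exit hU p₁.reverse with ⟨q₂, h₂⟩ | ⟨b, hb, q₂, p₂, h₂⟩
  · refine ⟨q₁.append q₂.reverse, ?_⟩
    simp only [walkWeight_append, walkWeight_reverse, Walk.length_reverse] at h₂ ⊢
    omega
  · obtain ⟨q, hq⟩ := exists_walk_le_dist_add_of_notMem hconn hf hD ha hb
    refine ⟨q₁.append (q.append q₂.reverse), ?_⟩
    have := dist_comm.trans_le (dist_le p₂)
    simp only [walkWeight_append, walkWeight_reverse, Walk.length_reverse] at h₂ ⊢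
    omega

end Routing

section EmulatorGraph

variable {V : Type*} (G : SimpleGraph V) (U : Finset V) {D : Finset V} {f : V → V} {γ : ℕ}

def insideEdges : SimpleGraph V := fromRel fun x y => G.Adj x y ∧ x ∈ U ∧ y ∈ U

def crossingEdges : SimpleGraph V := fromRel fun x y => G.Adj x y ∧ (x ∈ U ↔ y ∉ U)

variable {G U}

@[simp]
lemma insideEdges_adj {x y : V} : (insideEdges G U).Adj x y ↔ G.Adj x y ∧ x ∈ U ∧ y ∈ U := by
  rw [insideEdges, fromRel_adj]
  exact ⟨fun ⟨_, h⟩ => h.elim id fun h => ⟨h.1.symm, h.2.2, h.2.1⟩,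
    fun h => ⟨h.1.ne, .inl h⟩⟩

@[simp]
lemma crossingEdges_adj {x y : V} : (crossingEdges G U).Adj x y ↔ G.Adj x y ∧ (x ∈ U ↔ y ∉ U) := by
  rw [crossingEdges, fromRel_adj]
  exact ⟨fun ⟨_, h⟩ => h.elim id fun h => ⟨h.1.symm, by tauto⟩, fun h => ⟨h.1.ne, .inl h⟩⟩

variable (G U D f) in
def emulatorGraph : SimpleGraph V :=
  insideEdges G U ⊔ crossingEdges G U ⊔ fromRel (fun x y => x ∉ U ∧ y = f x) ⊔
    fromRel (fun x y => x ∈ D ∧ y ∈ D)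

lemma exists_walk_emulatorGraph_le_dist_add (hconn : G.Connected)
    (hf : ∀ x ∉ U, f x ∈ D ∧ G.dist x (f x) ≤ γ) (u v : V) :
    ∃ q : (emulatorGraph G U D f).Walk u v,
      walkWeight (emuWeight G) q ≤ G.dist u v + 4 * γ := by
  refine exists_walk_le_dist_add (U := (U : Set V)) (D := (D : Set V)) hconn (fun x y hxy hx => ?_)
    (fun x hx => ⟨?_, hf x hx⟩) (fun x hx y hy => ?_) u v
  · by_cases hy : y ∈ U
    · exact .inl (.inl (.inl (insideEdges_adj.2 ⟨hxy, hx, hy⟩)))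
    · exact .inl (.inl (.inr (crossingEdges_adj.2 ⟨hxy, by simpa [hy] using hx⟩)))
  · exact (fromRel_adj_or_eq ⟨hx, rfl⟩).imp_left fun h => .inl (.inr h)
  · exact (fromRel_adj_or_eq ⟨hx, hy⟩).imp_left .inr

end EmulatorGraph

section Emulator

variable {V : Type*} [Fintype V] [DecidableEq V] {G : SimpleGraph V} {U D : Finset V}
  {f : V → V} {γ d : ℕ}

lemma card_edgeFinset_le_of_chain_heads_mem {B : SimpleGraph V} [DecidableRel B.Adj] (hBG : B ≤ G)
    (hg : ((2 * γ : ℕ) : ℕ∞) < G.egirth) (hU : ∀ v, #{x ∈ U | G.dist v x ≤ γ} < d ^ γ)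
    (hroot : ∀ s : Finset V, s.Nonempty → (∀ x ∈ s, d < #(B.neighborFinset x ∩ s)) →
      ∃ r ∈ s, ∀ q ∈ nonBacktrackingChains B s r γ, q.1 ∈ U) :
    #B.edgeFinset ≤ d * Fintype.card V := by
  refine card_edgeFinset_le_of_forall_exists_degree_le B d fun s hs => ?_
  by_contra! hdeg
  obtain ⟨r, hr, hheads⟩ := hroot s hs hdeg
  have hball : (nonBacktrackingChains B s r γ).image Prod.fst ⊆ {x ∈ U | G.dist r x ≤ γ} := by
    rintro _ hx
    obtain ⟨q, hq, rfl⟩ := mem_image.1 hx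
    exact mem_filter.2 ⟨hheads q hq, dist_le_of_mem_nonBacktrackingChains hBG hq⟩
  have := pow_le_card_image_fst_nonBacktrackingChains hdeg hr (hg.trans_le (egirth_anti hBG))
  exact (this.trans (card_le_card hball)).not_gt (hU r)

lemma card_edgeFinset_insideEdges_le [DecidableRel (insideEdges G U).Adj]
    (hg : ((2 * γ : ℕ) : ℕ∞) < G.egirth) (hU : ∀ v, #{x ∈ U | G.dist v x ≤ γ} < d ^ γ) :
    #(insideEdges G U).edgeFinset ≤ d * Fintype.card V := by
  refine card_edgeFinset_le_of_chain_heads_mem (fun x y h => (insideEdges_adj.1 h).1) hg hU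
    fun s ⟨r, hr⟩ hdeg => ⟨r, hr, fun q hq => ?_⟩
  obtain ⟨y, hy⟩ := card_pos.1 ((Nat.zero_le d).trans_lt
    (hdeg q.1 (fst_mem_of_mem_nonBacktrackingChains hr hq)))
  exact (insideEdges_adj.1 ((mem_neighborFinset _ _ _).1 (mem_inter.1 hy).1)).2.1

/-- Chains in the bipartite graph alternate sides, so rooting them on the side of parity `γ`
puts every head in `U`. -/
lemma card_edgeFinset_crossingEdges_le [DecidableRel (crossingEdges G U).Adj]
    (hg : ((2 * γ : ℕ) : ℕ∞) < G.egirth) (hU : ∀ v, #{x ∈ U | G.dist v x ≤ γ} < d ^ γ) :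
    #(crossingEdges G U).edgeFinset ≤ d * Fintype.card V := by
  refine card_edgeFinset_le_of_chain_heads_mem (fun x y h => (crossingEdges_adj.1 h).1) hg hU
    fun s ⟨x, hx⟩ hdeg => ?_
  obtain ⟨y, hy⟩ := card_pos.1 ((Nat.zero_le d).trans_lt (hdeg x hx))
  rw [mem_inter, mem_neighborFinset, crossingEdges_adj] at hy
  have hside := fun x y (h : (crossingEdges G U).Adj x y) => (crossingEdges_adj.1 h).2
  have hroot : ∃ r ∈ s, (r ∈ U ↔ Even γ) := by
    by_cases h : x ∈ U ↔ Even γ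
    · exact ⟨x, hx, h⟩
    · exact ⟨y, hy.2, by tauto⟩
  obtain ⟨r, hr, hrU⟩ := hroot
  exact ⟨r, hr, fun q hq =>
    (mem_iff_even_of_mem_nonBacktrackingChains (U := (U : Set V)) hside hq).2 hrU⟩

lemma ncard_edgeSet_emulatorGraph_le (hg : ((2 * γ : ℕ) : ℕ∞) < G.egirth)
    (hU : ∀ v, #{x ∈ U | G.dist v x ≤ γ} < d ^ γ) :
    (emulatorGraph G U D f).edgeSet.ncard ≤ 2 * d * Fintype.card V + Fintype.card V + #D ^ 2 := by
  classical
  have hstar : #(fromRel (fun x y => x ∉ U ∧ y = f x)).edgeFinset ≤ Fintype.card V :=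
    (card_edgeFinset_fromRel_le _).trans (card_le_card_of_injOn Prod.fst (fun _ _ => mem_univ _)
      fun p hp p' hp' h => Prod.ext h (by simp_all))
  have hclique : #(fromRel (fun x y => x ∈ D ∧ y ∈ D)).edgeFinset ≤ #D ^ 2 := by
    refine (card_edgeFinset_fromRel_le _).trans (le_of_eq ?_)
    rw [sq, ← card_product]
    congr 1
    ext
    simp
  have := card_edgeFinset_insideEdges_le (d := d) (U := U) hg hU
  have := card_edgeFinset_crossingEdges_le (d := d) (U := U) hg hU
  simp only [emulatorGraph, edgeSet_sup]
  grw [Set.ncard_union_le, Set.ncard_union_le, Set.ncard_union_le]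
  simp only [← coe_edgeFinset, Set.ncard_coe_finset]
  linarith

theorem exists_emulator (hconn : G.Connected) (hg : ((2 * γ : ℕ) : ℕ∞) < G.egirth)
    (hd : Fintype.card V ≤ d ^ (2 * γ + 1)) :
    ∃ H : SimpleGraph V, H.edgeSet.ncard ≤ 4 * d * Fintype.card V ∧
      ∀ u v, H.Reachable u v ∧ wdist H (emuWeight G) u v ≤ G.dist u v + 4 * γ := by
  have hV : 0 < Fintype.card V := Fintype.card_pos_iff.2 hconn.nonempty
  have hd0 : 0 < d := Nat.pos_of_ne_zero fun h => by simp [h] at hd; omega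
  obtain ⟨U, D, f, hU, hf, hD⟩ := exists_centres G γ (pow_pos hd0 γ) univ
  have hDsq : #D ^ 2 ≤ d * Fintype.card V := by
    refine Nat.le_of_mul_le_mul_right (c := d ^ (2 * γ)) ?_ (by positivity)
    calc #D ^ 2 * d ^ (2 * γ) = (#D * d ^ γ) ^ 2 := by ring
      _ ≤ Fintype.card V ^ 2 := Nat.pow_le_pow_left (by simpa using hD) 2
      _ ≤ Fintype.card V * d ^ (2 * γ + 1) := by rw [sq]; exact Nat.mul_le_mul_left _ hd
      _ = d * Fintype.card V * d ^ (2 * γ) := by ring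
  refine ⟨emulatorGraph G U D f, ?_, fun u v => ?_⟩
  · have := ncard_edgeSet_emulatorGraph_le (D := D) (f := f) hg hU
    nlinarith
  · obtain ⟨q, hq⟩ := exists_walk_emulatorGraph_le_dist_add hconn (fun x hx => hf x (by simpa)) u v
    exact ⟨⟨q⟩, (wdist_le_walkWeight q).trans hq⟩

end Emulator

lemma le_ceil_rpow_inv_pow (n : ℕ) {m : ℕ} (hm : m ≠ 0) : n ≤ ⌈(n : ℝ) ^ (m : ℝ)⁻¹⌉₊ ^ m := by
  have : (n : ℝ) ≤ (⌈(n : ℝ) ^ (m : ℝ)⁻¹⌉₊ : ℝ) ^ m := by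
    conv_lhs => rw [← Real.rpow_inv_natCast_pow n.cast_nonneg hm]
    gcongr
    exact Nat.le_ceil _
  exact_mod_cast this

theorem stmt_15 :
    ∀ γ : ℕ, 1 ≤ γ →
    ∃ C : ℝ, 0 < C ∧
      ∀ n : ℕ, ∀ G : SimpleGraph (Fin n), G.Connected →
        ((2 * γ + 1 : ℕ) : ℕ∞) ≤ G.egirth →
        ∃ H : SimpleGraph (Fin n),
          (H.edgeSet.ncard : ℝ) ≤ C * (n : ℝ) ^ (1 + 1 / (2 * (γ : ℝ) + 1)) ∧
          ∀ u v : Fin n, H.Reachable u v ∧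
            wdist H (emuWeight G) u v ≤ G.dist u v + 4 * γ := by
  intro γ _
  refine ⟨8, by norm_num, fun n G hconn hg => ?_⟩
  have hn : (1 : ℝ) ≤ n := by
    exact_mod_cast Fintype.card_fin n ▸ Fintype.card_pos_iff.2 hconn.nonempty
  have hε : 1 / (2 * (γ : ℝ) + 1) = ((2 * γ + 1 : ℕ) : ℝ)⁻¹ := by push_cast; exact one_div _
  set x := (n : ℝ) ^ ((2 * γ + 1 : ℕ) : ℝ)⁻¹
  obtain ⟨H, hH, hdist⟩ := exists_emulator (d := ⌈x⌉₊) hconn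
    ((Nat.cast_lt.2 (Nat.lt_succ_self _)).trans_le hg)
    (by rw [Fintype.card_fin]; exact le_ceil_rpow_inv_pow n (2 * γ).succ_ne_zero)
  refine ⟨H, ?_, hdist⟩
  have hx : (⌈x⌉₊ : ℝ) ≤ 2 * x :=
    Nat.ceil_le_two_mul ((by norm_num : (2 : ℝ)⁻¹ ≤ 1).trans (Real.one_le_rpow hn (by positivity)))
  calc (H.edgeSet.ncard : ℝ) ≤ 4 * ⌈x⌉₊ * n := by simpa using (Nat.cast_le (α := ℝ)).2 hH
    _ ≤ 4 * (2 * x) * n := by gcongr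
    _ = 8 * (n : ℝ) ^ (1 + 1 / (2 * (γ : ℝ) + 1)) := by
      rw [hε, Real.rpow_add (by linarith), Real.rpow_one]
      ring
end
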